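/- arXiv:1710.08249 — 6 statements merged into one kernel-verified Lean document; each statement's English description precedes it below -/
import Mathlib

section
/- For any x ∈ B_n, the strings M(x) and N(x) are distinct elements of B_n', each obtained from x by flipping a single 0-bit to a 1-bit. -/
/-- Hamming weight. -/
def wt {m : ℕ} (x : Fin m → Bool) : ℕ :=
  (Finset.univ.filter (fun i => x i = true)).card

/-- Surplus of zeros over ones in the prefix of `x` ending at position `j`. -/
def surplus {m : ℕ} (x : Fin m → Bool) (j : Fin m) : ℤ :=
  ((Finset.univ.filter (fun i => i ≤ j ∧ x i = false)).card : ℤ) -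
  ((Finset.univ.filter (fun i => i ≤ j ∧ x i = true)).card : ℤ)

/-- Sorting key for the prefixes ending in 0 (i.e. for positions `j` with
`x j = false`): decreasing surplus of zeros over ones, ties broken by
increasing prefix length.  A smaller key means earlier in the total order. -/
def key {m : ℕ} (x : Fin m → Bool) (j : Fin m) : Lex (ℤ × ℕ) :=
  toLex (-(surplus x j), (j : ℕ))

/-- Flip the bit of `x` at position `j`. -/
def flipBit {m : ℕ} (x : Fin m → Bool) (j : Fin m) : Fin m → Bool :=
  Function.update x j (!(x j))

/-- `IsN x y` : `y` is obtained from `x` by flipping the last bit of the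
*first* prefix ending in 0 in the lexical total order. -/
def IsN {m : ℕ} (x y : Fin m → Bool) : Prop :=
  ∃ j, x j = false ∧ (∀ j', x j' = false → j' ≠ j → key x j < key x j') ∧
    y = flipBit x j

/-- `IsM x y` : `y` is obtained from `x` by flipping the last bit of the
*second* prefix ending in 0 in the lexical total order. -/
def IsM {m : ℕ} (x y : Fin m → Bool) : Prop :=
  ∃ j₀ j, x j₀ = false ∧ x j = false ∧ j ≠ j₀ ∧
    (∀ j', x j' = false → j' ≠ j₀ → key x j₀ < key x j') ∧
    (∀ j', x j' = false → j' ≠ j₀ → j' ≠ j → key x j < key x j') ∧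
    y = flipBit x j

/-- `B_n` : bitstrings of length `2n+1` with exactly `n` ones. -/
def Bn (n : ℕ) : Set (Fin (2 * n + 1) → Bool) := {x | wt x = n}

/-- `B_n'` : bitstrings of length `2n+1` with exactly `n+1` ones. -/
def Bn' (n : ℕ) : Set (Fin (2 * n + 1) → Bool) := {x | wt x = n + 1}

/-
Flipping a 0 of `x` adds one to its weight, and a string in `B_n` has `n + 1 ≥ 2` zeros. The key
records the prefix length, so it is injective and the zero positions are totally ordered by it
without ties: its least zero gives `N(x)`, its second least gives `M(x)`, and flipping two
different positions gives two different strings.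
-/

open Finset

section Flips

variable {m : ℕ}

def zeros (x : Fin m → Bool) : Finset (Fin m) := univ.filter (fun i => x i = false)

@[simp]
lemma mem_zeros {x : Fin m → Bool} {i : Fin m} : i ∈ zeros x ↔ x i = false := by
  simp [zeros]

lemma card_zeros_add_wt (x : Fin m → Bool) : #(zeros x) + wt x = m := by
  simpa [zeros, wt] using card_filter_add_card_filter_not (s := univ) (fun i => x i = false)

lemma wt_flipBit {x : Fin m → Bool} {j : Fin m} (hj : x j = false) :
    wt (flipBit x j) = wt x + 1 := by
  have hones : univ.filter (fun i => flipBit x j i = true) =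
      insert j (univ.filter (fun i => x i = true)) := by
    ext i
    rcases eq_or_ne i j with rfl | hij
    · simp [flipBit, hj]
    · simp [flipBit, Function.update_apply, hij]
  rw [wt, hones, card_insert_of_notMem (by simp [hj]), wt]

lemma flipBit_injective (x : Fin m → Bool) : Function.Injective (flipBit x) := by
  intro i j h
  by_contra hij
  simpa [flipBit, Function.update_of_ne hij] using congrFun h i

lemma key_injective (x : Fin m → Bool) : Function.Injective (key x) := fun i j h =>
  Fin.ext (by simpa [key] using congrArg (fun p => (ofLex p).2) h)

lemma exists_key_lt {x : Fin m → Bool} {s : Finset (Fin m)} (hs : s.Nonempty) :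
    ∃ j ∈ s, ∀ j' ∈ s, j' ≠ j → key x j < key x j' := by
  obtain ⟨j, hj, hmin⟩ := s.exists_min_image (key x) hs
  exact ⟨j, hj, fun j' hj' hne =>
    (hmin j' hj').lt_of_ne fun h => hne (key_injective x h).symm⟩

lemma exists_isM_isN {x : Fin m → Bool} (hx : 2 ≤ #(zeros x)) :
    ∃ j₀ j, x j₀ = false ∧ x j = false ∧ j ≠ j₀ ∧
      IsM x (flipBit x j) ∧ IsN x (flipBit x j₀) := by
  obtain ⟨j₀, hj₀, hfirst⟩ := exists_key_lt (x := x) (s := zeros x) (card_pos.mp (by omega))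
  have hrest : ((zeros x).erase j₀).Nonempty := card_pos.mp (by rw [card_erase_of_mem hj₀]; omega)
  obtain ⟨j, hj, hsecond⟩ := exists_key_lt (x := x) hrest
  obtain ⟨hjj₀, hj⟩ := mem_erase.mp hj
  have hfirst' : ∀ j', x j' = false → j' ≠ j₀ → key x j₀ < key x j' :=
    fun j' h => hfirst j' (mem_zeros.mpr h)
  rw [mem_zeros] at hj₀ hj
  refine ⟨j₀, j, hj₀, hj, hjj₀, ⟨j₀, j, hj₀, hj, hjj₀, hfirst', ?_, rfl⟩, ⟨j₀, hj₀, hfirst', rfl⟩⟩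
  exact fun j' h hj₀' => hsecond j' (mem_erase.mpr ⟨hj₀', mem_zeros.mpr h⟩)

end Flips

/-- For any `x ∈ B_n`, the strings `M(x)` and `N(x)` exist, are distinct
elements of `B_n'`, and each is obtained from `x` by flipping a single
0-bit to a 1-bit. -/
theorem M_N_wellDefined (n : ℕ) (hn : 1 ≤ n) (x : Fin (2 * n + 1) → Bool)
    (hx : x ∈ Bn n) :
    ∃ y z, IsM x y ∧ IsN x z ∧ y ≠ z ∧ y ∈ Bn' n ∧ z ∈ Bn' n ∧
      (∃ j, x j = false ∧ y = flipBit x j) ∧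
      (∃ j, x j = false ∧ z = flipBit x j) := by
  have hwt : wt x = n := hx
  have hzeros : #(zeros x) = n + 1 := by have := card_zeros_add_wt x; omega
  obtain ⟨j₀, j, hj₀, hj, hjj₀, hM, hN⟩ := exists_isM_isN (x := x) (by omega)
  refine ⟨flipBit x j, flipBit x j₀, hM, hN, (flipBit_injective x).ne hjj₀, ?_, ?_,
    ⟨j, hj, rfl⟩, ⟨j₀, hj₀, rfl⟩⟩
  · exact (wt_flipBit hj).trans (congrArg (· + 1) hwt)
  · exact (wt_flipBit hj₀).trans (congrArg (· + 1) hwt)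
end

section
/- The maps M : B_n → B_n' and N : B_n → B_n' defined by the lexical matching rules are bijections. -/
namespace MN

/-- partial sums of the ±1 walk -/
def S {m : ℕ} (x : Fin m → Bool) (k : ℕ) : ℤ :=
  ∑ t ∈ Finset.range k, (if h : t < m then (if x ⟨t, h⟩ = true then (-1 : ℤ) else 1) else 0)

variable {m : ℕ} {x : Fin m → Bool}

lemma S_zero : S x 0 = 0 := by simp [S]

lemma S_succ {k : ℕ} (h : k < m) :
    S x (k + 1) = S x k + (if x ⟨k, h⟩ = true then (-1 : ℤ) else 1) := by
  rw [S, Finset.sum_range_succ, dif_pos h]; rfl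

lemma sum_pm {ι : Type*} (s : Finset ι) (p : ι → Bool) :
    ∑ i ∈ s, (if p i = true then (-1 : ℤ) else 1)
      = ((s.filter (fun i => p i = false)).card : ℤ) - ((s.filter (fun i => p i = true)).card : ℤ) := by
  rw [← Finset.sum_filter_add_sum_filter_not s (fun i => p i = true)]
  rw [Finset.sum_congr rfl (fun i hi => if_pos (Finset.mem_filter.mp hi).2)]
  have : s.filter (fun i => ¬ p i = true) = s.filter (fun i => p i = false) := by
    apply Finset.filter_congr; intro i _; simp
  rw [this, Finset.sum_congr rfl (fun i hi => if_neg (by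
    have := (Finset.mem_filter.mp hi).2; simp_all))]
  simp [mul_comm]; ring

lemma surplus_eq (j : Fin m) : surplus x j = S x (j.1 + 1) := by
  have hr : Finset.range (j.1 + 1) = (Finset.Iic j).map Fin.valEmbedding := by
    ext t
    simp only [Finset.mem_range, Finset.mem_map, Finset.mem_Iic, Fin.valEmbedding_apply,
      Nat.lt_succ_iff]
    constructor
    · intro ht; exact ⟨⟨t, lt_of_le_of_lt ht j.2⟩, ht, rfl⟩
    · rintro ⟨i, hi, rfl⟩; exact hi
  have h1 : S x (j.1 + 1) = ∑ i ∈ Finset.Iic j, (if x i = true then (-1 : ℤ) else 1) := by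
    rw [S, hr, Finset.sum_map]
    apply Finset.sum_congr rfl; intro i _
    simp only [Fin.valEmbedding_apply]
    rw [dif_pos i.2]
  rw [h1, sum_pm]
  have e1 : (Finset.Iic j).filter (fun i => x i = false)
      = Finset.univ.filter (fun i => i ≤ j ∧ x i = false) := by
    ext i; simp [Finset.mem_Iic, and_comm]
  have e2 : (Finset.Iic j).filter (fun i => x i = true)
      = Finset.univ.filter (fun i => i ≤ j ∧ x i = true) := by
    ext i; simp [Finset.mem_Iic, and_comm]
  rw [e1, e2, surplus]

lemma card_false_eq : (Finset.univ.filter (fun i => x i = false)).card = m - wt x := by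
  have h := Finset.card_filter_add_card_filter_not (s := (Finset.univ : Finset (Fin m)))
    (p := fun i => x i = true)
  have h2 : Finset.univ.filter (fun i => ¬ x i = true) = Finset.univ.filter (fun i => x i = false) := by
    apply Finset.filter_congr; intro i _; simp
  rw [h2] at h
  simp only [Finset.card_univ, Fintype.card_fin] at h
  have : wt x = (Finset.univ.filter (fun i => x i = true)).card := rfl
  omega

lemma S_top : S x m = ((m - wt x : ℕ) : ℤ) - (wt x : ℤ) := by
  have h1 : S x m = ∑ i : Fin m, (if x i = true then (-1 : ℤ) else 1) := by
    rw [S, ← Fin.sum_univ_eq_sum_range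
      (fun t => if h : t < m then (if x ⟨t, h⟩ = true then (-1 : ℤ) else 1) else 0) m]
    apply Finset.sum_congr rfl; intro i _
    rw [dif_pos i.2]
  rw [h1, sum_pm, card_false_eq]; rfl

lemma wt_le : wt x ≤ m := by
  have : wt x ≤ (Finset.univ : Finset (Fin m)).card := Finset.card_le_card (Finset.filter_subset _ _)
  simpa using this

lemma S_total {n : ℕ} (hm : m = 2 * n + 1) (hx : wt x = n) : S x m = 1 := by
  rw [S_top, hx, hm]
  have : 2 * n + 1 - n = n + 1 := by omega
  rw [this]; push_cast; ring

variable {m : ℕ} {x x' : Fin m → Bool}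

lemma wt_flip {j : Fin m} (hj : x j = false) : wt (flipBit x j) = wt x + 1 := by
  have h : Finset.univ.filter (fun i => flipBit x j i = true)
      = insert j (Finset.univ.filter (fun i => x i = true)) := by
    ext i
    by_cases hij : i = j
    · subst hij; simp [flipBit, Function.update_self, hj]
    · rw [Finset.mem_insert, Finset.mem_filter, Finset.mem_filter]
      simp [flipBit, Function.update_of_ne hij, hij]
  rw [wt, h, Finset.card_insert_of_notMem (by simp [hj])]; rfl

lemma S_flip {j : Fin m} (hj : x j = false) (k : ℕ) :
    S (flipBit x j) k = S x k - (if j.1 < k then 2 else 0) := by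
  rw [S, S]
  have : ∀ t ∈ Finset.range k,
      (if h : t < m then (if flipBit x j ⟨t, h⟩ = true then (-1 : ℤ) else 1) else 0)
      = (if h : t < m then (if x ⟨t, h⟩ = true then (-1 : ℤ) else 1) else 0)
        + (if t = j.1 then -2 else 0) := by
    intro t _
    by_cases ht : t < m
    · rw [dif_pos ht, dif_pos ht]
      by_cases htj : t = j.1
      · have : (⟨t, ht⟩ : Fin m) = j := Fin.ext htj
        rw [this, if_pos htj]
        simp [flipBit, Function.update_self, hj]
      · have : (⟨t, ht⟩ : Fin m) ≠ j := fun h => htj (congrArg Fin.val h)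
        rw [if_neg htj]; simp [flipBit, Function.update_of_ne this]
    · have : ¬ t = j.1 := fun h => ht (h ▸ j.2)
      rw [dif_neg ht, dif_neg ht, if_neg this]; ring
  rw [Finset.sum_congr rfl this, Finset.sum_add_distrib]
  congr 1
  rw [Finset.sum_ite_eq' (Finset.range k) j.1 (fun _ => (-2 : ℤ))]
  by_cases h : j.1 < k <;> simp [h]

lemma flip_flip {j : Fin m} : flipBit (flipBit x j) j = x := by
  funext i
  by_cases hij : i = j
  · subst hij; simp [flipBit, Function.update_self]
  · simp [flipBit, Function.update_of_ne hij]

lemma key_lt_iff {a b : Fin m} :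
    key x a < key x b ↔ surplus x b < surplus x a ∨ (surplus x a = surplus x b ∧ a.1 < b.1) := by
  rw [key, key, Prod.Lex.lt_iff]
  simp only [ofLex_toLex]
  constructor
  · rintro (h | ⟨h1, h2⟩)
    · exact Or.inl (by omega)
    · exact Or.inr ⟨by omega, h2⟩
  · rintro (h | ⟨h1, h2⟩)
    · exact Or.inl (by simpa using h)
    · exact Or.inr ⟨by omega, h2⟩

lemma key_injOn {a b : Fin m} (h : key x a = key x b) : a = b := by
  have : ((-(surplus x a), (a : ℕ)) : ℤ × ℕ) = (-(surplus x b), (b : ℕ)) := by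
    exact congrArg ofLex h
  exact Fin.ext (congrArg Prod.snd this)



section First
variable {n : ℕ} {j₀ : Fin m}

/-- (a) and (c): the surplus at the key-minimal zero bounds the whole walk, and is ≥ 1. -/
lemma first_facts (hm : m = 2 * n + 1) (hx : wt x = n)
    (h0 : x j₀ = false) (hmin : ∀ j', x j' = false → j' ≠ j₀ → key x j₀ < key x j') :
    (∀ k, k ≤ m → S x k ≤ surplus x j₀) ∧ 1 ≤ surplus x j₀ := by
  classical
  obtain ⟨kv, hkvmem, hVmax⟩ := Finset.exists_max_image (Finset.range (m+1)) (S x)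
    ⟨0, Finset.mem_range.mpr (by omega)⟩
  have hVm : ∀ k, k ≤ m → S x k ≤ S x kv := fun k hk => hVmax k (Finset.mem_range.mpr (by omega))
  have hV1 : (1 : ℤ) ≤ S x kv := by
    have := hVm m le_rfl; rw [S_total hm hx] at this; exact this
  have hex : ∃ k, k ≤ m ∧ S x kv ≤ S x k :=
    ⟨kv, Nat.lt_succ_iff.mp (Finset.mem_range.mp hkvmem), le_rfl⟩
  obtain ⟨k₀, ⟨hk₀m, hk₀V⟩, hk₀min⟩ :
      ∃ k₀, (k₀ ≤ m ∧ S x kv ≤ S x k₀) ∧ ∀ k, k < k₀ → ¬(k ≤ m ∧ S x kv ≤ S x k) :=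
    ⟨Nat.find hex, Nat.find_spec hex, fun k hk => Nat.find_min hex hk⟩
  have hk₀pos : 1 ≤ k₀ := by
    rcases Nat.eq_zero_or_pos k₀ with h | h
    · exfalso; rw [h, S_zero] at hk₀V; omega
    · exact h
  have hlt : S x (k₀ - 1) < S x kv := by
    have h := hk₀min (k₀ - 1) (by omega)
    push_neg at h
    exact h (by omega)
  have hklt : k₀ - 1 < m := by omega
  have hk1 : k₀ - 1 + 1 = k₀ := by omega
  have hstep := S_succ (x := x) hklt
  rw [hk1] at hstep
  have hxk : x ⟨k₀ - 1, hklt⟩ = false := by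
    by_contra hxe
    rw [if_pos (by simpa using hxe)] at hstep
    have := hVm (k₀ - 1) (by omega)
    omega
  rw [hxk] at hstep
  simp only [Bool.false_eq_true, if_false] at hstep
  have hsp : surplus x ⟨k₀ - 1, hklt⟩ = S x k₀ := by
    rw [surplus_eq]; exact congrArg (S x) hk1
  have hMV : S x kv ≤ surplus x j₀ := by
    by_cases hpj : (⟨k₀ - 1, hklt⟩ : Fin m) = j₀
    · rw [← hpj, hsp]; exact hk₀V
    · have hk := hmin _ hxk hpj
      rw [key_lt_iff, hsp] at hk
      rcases hk with h | ⟨h, _⟩ <;> omega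
  exact ⟨fun k hk => le_trans (hVm k hk) hMV, le_trans hV1 hMV⟩

/-- (b): strictly below the max before `j₀`. -/
lemma first_strict (hm : m = 2 * n + 1) (hx : wt x = n)
    (h0 : x j₀ = false) (hmin : ∀ j', x j' = false → j' ≠ j₀ → key x j₀ < key x j') :
    ∀ k, k ≤ j₀.1 → S x k < surplus x j₀ := by
  obtain ⟨ha, hc⟩ := first_facts hm hx h0 hmin
  intro k hk
  rcases Nat.eq_zero_or_pos k with h | h
  · rw [h, S_zero]; omega
  have hklt : k - 1 < m := by omega
  have hk1 : k - 1 + 1 = k := by omega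
  have hstep := S_succ (x := x) hklt
  rw [hk1] at hstep
  by_cases hxk : x ⟨k - 1, hklt⟩ = true
  · rw [if_pos hxk] at hstep
    have := ha (k-1) (by omega)
    omega
  · rw [if_neg hxk] at hstep
    have hxk' : x ⟨k - 1, hklt⟩ = false := by simpa using hxk
    have hne : (⟨k - 1, hklt⟩ : Fin m) ≠ j₀ := by
      intro he
      have : k - 1 = j₀.1 := congrArg Fin.val he
      omega
    have hkey := hmin _ hxk' hne
    have hsp : surplus x ⟨k - 1, hklt⟩ = S x k := by
      rw [surplus_eq]; exact congrArg (S x) hk1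
    rw [key_lt_iff, hsp] at hkey
    rcases hkey with hlt | ⟨heq, hv⟩
    · omega
    · exfalso
      have hv' : j₀.1 < k - 1 := hv
      omega

end First

section Second
variable {n : ℕ} {j₀ j : Fin m}

/-- Lemma C: the walk is at `M-1` just before `j₀`, and if `j₀ ≥ 1` the previous
position is also a zero with surplus `M-1`. -/
lemma pred_zero (hm : m = 2 * n + 1) (hx : wt x = n)
    (h0 : x j₀ = false) (hmin : ∀ j', x j' = false → j' ≠ j₀ → key x j₀ < key x j')
    (h1 : 1 ≤ j₀.1) (hlt : j₀.1 - 1 < m) :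
    x ⟨j₀.1 - 1, hlt⟩ = false ∧ surplus x ⟨j₀.1 - 1, hlt⟩ = surplus x j₀ - 1 := by
  have hstep0 := S_succ (x := x) j₀.2
  rw [Fin.eta, h0] at hstep0
  simp only [Bool.false_eq_true, if_false] at hstep0
  have hsj : S x (j₀.1 + 1) = surplus x j₀ := (surplus_eq j₀).symm
  -- S x j₀.1 = M - 1
  have hSj₀ : S x j₀.1 = surplus x j₀ - 1 := by omega
  have hk1 : j₀.1 - 1 + 1 = j₀.1 := by omega
  have hstep := S_succ (x := x) hlt
  rw [hk1] at hstep
  have hxf : x ⟨j₀.1 - 1, hlt⟩ = false := by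
    by_contra hxe
    rw [if_pos (by simpa using hxe)] at hstep
    have := first_strict hm hx h0 hmin (j₀.1 - 1) (by omega)
    omega
  refine ⟨hxf, ?_⟩
  rw [surplus_eq]
  have : (⟨j₀.1 - 1, hlt⟩ : Fin m).1 + 1 = j₀.1 := hk1
  rw [this]; exact hSj₀

/-- The last zero has surplus at least 1. -/
lemma last_zero (hm : m = 2 * n + 1) (hx : wt x = n) (hne : ∃ i, x i = false) :
    ∃ z, x z = false ∧ (∀ i, x i = false → i.1 ≤ z.1) ∧ 1 ≤ surplus x z := by
  classical
  obtain ⟨i₀, hi₀⟩ := hne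
  obtain ⟨z, hzmem, hzmax⟩ := Finset.exists_max_image
    (Finset.univ.filter (fun i => x i = false)) (Fin.val)
    ⟨i₀, Finset.mem_filter.mpr ⟨Finset.mem_univ _, hi₀⟩⟩
  have hz : x z = false := (Finset.mem_filter.mp hzmem).2
  have hzm : ∀ i, x i = false → i.1 ≤ z.1 := fun i hi =>
    hzmax i (Finset.mem_filter.mpr ⟨Finset.mem_univ _, hi⟩)
  refine ⟨z, hz, hzm, ?_⟩
  have key : ∀ d, d ≤ m - (z.1 + 1) → 1 ≤ S x (m - d) := by
    intro d
    induction d with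
    | zero => intro _; simpa [S_total hm hx] using le_refl (1 : ℤ)
    | succ d ih =>
      intro hd
      have hklt : m - (d + 1) < m := by omega
      have hxk : x ⟨m - (d + 1), hklt⟩ = true := by
        by_contra hxe
        have := hzm _ (by simpa using hxe)
        simp only [Fin.val_mk] at this
        omega
      have hstep := S_succ (x := x) hklt
      rw [hxk, if_pos rfl] at hstep
      have hk1 : m - (d + 1) + 1 = m - d := by omega
      rw [hk1] at hstep
      have := ih (by omega)
      omega
  have hd := key (m - (z.1 + 1)) le_rfl
  have : m - (m - (z.1 + 1)) = z.1 + 1 := by omega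
  rw [this] at hd
  rw [surplus_eq]; exact hd

/-- The dichotomy for the second element of the key order. -/
lemma second_facts (hm : m = 2 * n + 1) (hx : wt x = n)
    (h0 : x j₀ = false) (hmin : ∀ j', x j' = false → j' ≠ j₀ → key x j₀ < key x j')
    (hj : x j = false) (hne : j ≠ j₀)
    (h2 : ∀ j', x j' = false → j' ≠ j₀ → j' ≠ j → key x j < key x j') :
    (j₀.1 < j.1 ∧ surplus x j = surplus x j₀ ∧
      (∀ k, k ≤ j.1 → k ≠ j₀.1 + 1 → S x k < surplus x j₀)) ∨
    (j.1 < j₀.1 ∧ surplus x j = surplus x j₀ - 1 ∧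
      (∀ k, 1 ≤ k → k ≤ j.1 → S x k < surplus x j₀ - 1) ∧
      (∀ k, k ≤ m → k ≠ j₀.1 + 1 → S x k ≤ surplus x j₀ - 1)) := by
  obtain ⟨ha, hc⟩ := first_facts hm hx h0 hmin
  have hb := first_strict hm hx h0 hmin
  have hkeyj := hmin j hj hne
  rw [key_lt_iff] at hkeyj
  have hvne : j.1 ≠ j₀.1 := fun h => hne (Fin.ext h)
  rcases Nat.lt_or_ge j₀.1 j.1 with hI | hII
  · -- Case I : j₀ < j
    left
    have hTleM : surplus x j ≤ surplus x j₀ := by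
      rw [surplus_eq j]; exact ha (j.1 + 1) (by omega)
    have hTgeM : surplus x j₀ ≤ surplus x j := by
      rcases Nat.eq_zero_or_pos j₀.1 with hz0 | hz1
      · -- j₀ = 0 : M = 1, use the last zero
        have hM1 : surplus x j₀ = 1 := by
          rw [surplus_eq, hz0]
          have hstep := S_succ (x := x) j₀.2
          rw [Fin.eta, h0] at hstep
          simp only [Bool.false_eq_true, if_false] at hstep
          rw [hz0] at hstep
          rw [hstep, S_zero]; ring
        obtain ⟨z, hzf, hzmax, hz1'⟩ := last_zero hm hx ⟨j, hj⟩
        have hzj : j.1 ≤ z.1 := hzmax j hj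
        have hzne0 : z ≠ j₀ := by
          intro h; rw [h, hz0] at hzj; omega
        by_cases hzj' : z = j
        · rw [← hzj']; omega
        · have := h2 z hzf hzne0 hzj'
          rw [key_lt_iff] at this
          rcases this with h | ⟨h, _⟩ <;> omega
      · -- j₀ ≥ 1 : use the zero just before j₀
        have hlt : j₀.1 - 1 < m := by omega
        obtain ⟨hpf, hps⟩ := pred_zero hm hx h0 hmin hz1 hlt
        have hpne0 : (⟨j₀.1 - 1, hlt⟩ : Fin m) ≠ j₀ := by
          intro h; have := congrArg Fin.val h; simp at this; omega
        have hpnej : (⟨j₀.1 - 1, hlt⟩ : Fin m) ≠ j := by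
          intro h; have := congrArg Fin.val h; simp at this; omega
        have hk := h2 _ hpf hpne0 hpnej
        rw [key_lt_iff, hps] at hk
        rcases hk with h | ⟨h, hv⟩
        · omega
        · exfalso; have : j.1 < j₀.1 - 1 := hv; omega
    have hTM : surplus x j = surplus x j₀ := le_antisymm hTleM hTgeM
    refine ⟨hI, hTM, ?_⟩
    intro k hk hkne
    rcases Nat.lt_or_ge j₀.1 k with hk2 | hk2
    · -- j₀ + 2 ≤ k ≤ j
      have hk3 : j₀.1 + 2 ≤ k := by omega
      have hklt : k - 1 < m := by omega
      have hk1 : k - 1 + 1 = k := by omega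
      have hstep := S_succ (x := x) hklt
      rw [hk1] at hstep
      by_cases hxk : x ⟨k - 1, hklt⟩ = true
      · rw [if_pos hxk] at hstep
        have := ha (k - 1) (by omega)
        omega
      · rw [if_neg hxk] at hstep
        have hxk' : x ⟨k - 1, hklt⟩ = false := by simpa using hxk
        have hne0 : (⟨k - 1, hklt⟩ : Fin m) ≠ j₀ := by
          intro h; have : k - 1 = j₀.1 := congrArg Fin.val h; omega
        have hnej : (⟨k - 1, hklt⟩ : Fin m) ≠ j := by
          intro h; have : k - 1 = j.1 := congrArg Fin.val h; omega
        have hkk := h2 _ hxk' hne0 hnej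
        have hsp : surplus x ⟨k - 1, hklt⟩ = S x k := by
          rw [surplus_eq]; exact congrArg (S x) hk1
        rw [key_lt_iff, hsp] at hkk
        rcases hkk with h | ⟨h, hv⟩
        · omega
        · exfalso; have : j.1 < k - 1 := hv; omega
    · exact hb k (by omega)
  · -- Case II : j < j₀
    right
    have hII' : j.1 < j₀.1 := by omega
    have hTltM : surplus x j < surplus x j₀ := by
      rcases hkeyj with h | ⟨h, hv⟩
      · exact h
      · exfalso; omega
    have hz1 : 1 ≤ j₀.1 := by omega
    have hlt : j₀.1 - 1 < m := by omega
    obtain ⟨hpf, hps⟩ := pred_zero hm hx h0 hmin hz1 hlt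
    have hTM : surplus x j = surplus x j₀ - 1 := by
      by_cases hpj : (⟨j₀.1 - 1, hlt⟩ : Fin m) = j
      · rw [← hpj]; exact hps
      · have hpne0 : (⟨j₀.1 - 1, hlt⟩ : Fin m) ≠ j₀ := by
          intro h; have := congrArg Fin.val h; simp at this; omega
        have hk := h2 _ hpf hpne0 hpj
        rw [key_lt_iff, hps] at hk
        rcases hk with h | ⟨h, _⟩ <;> omega
    refine ⟨hII', hTM, ?_, ?_⟩
    · -- (ii-a)
      intro k
      induction k with
      | zero => intro h _; omega
      | succ k ih =>
        intro _ hk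
        have hklt : k < m := by omega
        have hstep := S_succ (x := x) hklt
        by_cases hxk : x ⟨k, hklt⟩ = true
        · rw [if_pos hxk] at hstep
          rcases Nat.eq_zero_or_pos k with h0' | h1'
          · subst h0'; rw [S_zero] at hstep; rw [hstep]; omega
          · have := ih (by omega) (by omega)
            omega
        · rw [if_neg hxk] at hstep
          have hxk' : x ⟨k, hklt⟩ = false := by simpa using hxk
          have hne0 : (⟨k, hklt⟩ : Fin m) ≠ j₀ := by
            intro h; have : k = j₀.1 := congrArg Fin.val h; omega
          have hnej : (⟨k, hklt⟩ : Fin m) ≠ j := by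
            intro h; have : k = j.1 := congrArg Fin.val h; omega
          have hkk := h2 _ hxk' hne0 hnej
          have hsp : surplus x ⟨k, hklt⟩ = S x (k + 1) := by rw [surplus_eq]
          rw [key_lt_iff, hsp] at hkk
          rcases hkk with h | ⟨h, hv⟩
          · omega
          · exfalso; have : j.1 < k := hv; omega
    · -- (ii-b)
      intro k hkm hkne
      rcases Nat.eq_zero_or_pos k with h0' | h1'
      · rw [h0', S_zero]; omega
      have hklt : k - 1 < m := by omega
      have hk1 : k - 1 + 1 = k := by omega
      have hstep := S_succ (x := x) hklt
      rw [hk1] at hstep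
      by_cases hxk : x ⟨k - 1, hklt⟩ = true
      · rw [if_pos hxk] at hstep
        have := ha (k - 1) (by omega)
        omega
      · rw [if_neg hxk] at hstep
        have hxk' : x ⟨k - 1, hklt⟩ = false := by simpa using hxk
        have hsp : surplus x ⟨k - 1, hklt⟩ = S x k := by
          rw [surplus_eq]; exact congrArg (S x) hk1
        have hne0 : (⟨k - 1, hklt⟩ : Fin m) ≠ j₀ := by
          intro h; have : k - 1 = j₀.1 := congrArg Fin.val h; omega
        by_cases hpj : (⟨k - 1, hklt⟩ : Fin m) = j
        · rw [hpj] at hsp; omega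
        · have hkk := h2 _ hxk' hne0 hpj
          rw [key_lt_iff, hsp] at hkk
          rcases hkk with h | ⟨h, _⟩ <;> omega

end Second

section Inj
variable {n : ℕ}

lemma S_succ_false {j : Fin m} (h : x j = false) : S x (j.1 + 1) = S x j.1 + 1 := by
  have := S_succ (x := x) j.2
  rw [Fin.eta, h] at this
  simpa using this

lemma S_succ_true {j : Fin m} (h : x j = true) : S x (j.1 + 1) = S x j.1 - 1 := by
  have := S_succ (x := x) j.2
  rw [Fin.eta, h] at this
  simp at this; omega

lemma flip_cross {j j' : Fin m} (hflip : flipBit x j = flipBit x' j') (hne : j ≠ j')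
    (hj' : x' j' = false) : x j' = true := by
  have h1 : flipBit x j j' = x j' := Function.update_of_ne (Ne.symm hne) _ _
  have h2 : flipBit x' j' j' = !(x' j') := Function.update_self _ _ _
  rw [← h1, congrFun hflip j', h2, hj']
  rfl

lemma srel_base {j j' : Fin m} (hflip : flipBit x j = flipBit x' j') (hj : x j = false)
    (hj' : x' j' = false) (k : ℕ) :
    S x k - (if j.1 < k then 2 else 0) = S x' k - (if j'.1 < k then 2 else 0) := by
  rw [← S_flip hj k, ← S_flip hj' k, hflip]

/-- Core contradiction for injectivity of `N`. -/
lemma N_aux (hm : m = 2 * n + 1) (hx : wt x = n) (hx' : wt x' = n) {j j' : Fin m}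
    (hj : x j = false) (hmin : ∀ i, x i = false → i ≠ j → key x j < key x i)
    (hj' : x' j' = false) (hmin' : ∀ i, x' i = false → i ≠ j' → key x' j' < key x' i)
    (hflip : flipBit x j = flipBit x' j') (hjj : j.1 < j'.1) : False := by
  have hjm : j.1 < m := j.2
  have hj'm : j'.1 < m := j'.2
  obtain ⟨haA, hcA⟩ := first_facts hm hx hj hmin
  obtain ⟨haB, hcB⟩ := first_facts hm hx' hj' hmin'
  have hbB := first_strict hm hx' hj' hmin'
  have hxj' : x j' = true := flip_cross hflip (fun h => by omega) hj'
  have hMx : S x (j.1 + 1) = surplus x j := (surplus_eq _).symm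
  have hMy : S x' (j'.1 + 1) = surplus x' j' := (surplus_eq _).symm
  -- S x (j'+1) = surplus x' j'
  have e1 := srel_base hflip hj hj' (j'.1 + 1)
  rw [if_pos (by omega), if_pos (by omega)] at e1
  -- so S x j'.1 = M' + 1 ≤ M
  have e2 : S x (j'.1 + 1) = S x j'.1 - 1 := S_succ_true hxj'
  have e3 := haA j'.1 (by omega)
  -- S x j.1 = S x' j.1 = M - 1
  have e4 := srel_base hflip hj hj' j.1
  rw [if_neg (by omega), if_neg (by omega)] at e4
  have e5 : S x (j.1 + 1) = S x j.1 + 1 := S_succ_false hj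
  have e6 := haB j.1 (by omega)
  have e7 := hbB j.1 (by omega)
  omega

/-- Core contradiction for injectivity of `M`. -/
lemma M_aux (hm : m = 2 * n + 1) (hx : wt x = n) (hx' : wt x' = n) {j₀ j j₀' j' : Fin m}
    (h0 : x j₀ = false)
    (hmin : ∀ i, x i = false → i ≠ j₀ → key x j₀ < key x i)
    (hj : x j = false) (hnej : j ≠ j₀)
    (h2 : ∀ i, x i = false → i ≠ j₀ → i ≠ j → key x j < key x i)
    (h0' : x' j₀' = false)
    (hmin' : ∀ i, x' i = false → i ≠ j₀' → key x' j₀' < key x' i)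
    (hj' : x' j' = false) (hnej' : j' ≠ j₀')
    (h2' : ∀ i, x' i = false → i ≠ j₀' → i ≠ j' → key x' j' < key x' i)
    (hflip : flipBit x j = flipBit x' j') (hjj : j.1 < j'.1) : False := by
  have hjm : j.1 < m := j.2
  have hj'm : j'.1 < m := j'.2
  have hj₀m : j₀.1 < m := j₀.2
  have hj₀'m : j₀'.1 < m := j₀'.2
  obtain ⟨haA, hcA⟩ := first_facts hm hx h0 hmin
  have hbA := first_strict hm hx h0 hmin
  obtain ⟨haB, hcB⟩ := first_facts hm hx' h0' hmin'
  have hbB := first_strict hm hx' h0' hmin'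
  have hxj' : x j' = true := flip_cross hflip (fun h => by omega) hj'
  have hx'j : x' j = true := flip_cross hflip.symm (fun h => by omega) hj
  have hMx : S x (j₀.1 + 1) = surplus x j₀ := (surplus_eq _).symm
  have hMy : S x' (j₀'.1 + 1) = surplus x' j₀' := (surplus_eq _).symm
  have hTx : S x (j.1 + 1) = surplus x j := (surplus_eq _).symm
  have hTy : S x' (j'.1 + 1) = surplus x' j' := (surplus_eq _).symm
  -- j₀ ≠ j' and j₀' ≠ j as values
  have hne1 : j₀.1 ≠ j'.1 := by
    intro h; rw [Fin.ext h] at h0; rw [h0] at hxj'; exact Bool.noConfusion hxj'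
  have hne2 : j₀'.1 ≠ j.1 := by
    intro h; rw [Fin.ext h] at h0'; rw [h0'] at hx'j; exact Bool.noConfusion hx'j
  have hnejv : j.1 ≠ j₀.1 := fun h => hnej (Fin.ext h)
  have hnejv' : j'.1 ≠ j₀'.1 := fun h => hnej' (Fin.ext h)
  -- general fact : M' ≤ M
  have hM'leM : surplus x' j₀' ≤ surplus x j₀ := by
    have e := srel_base hflip hj hj' (j₀'.1 + 1)
    have e2 := haA (j₀'.1 + 1) (by omega)
    by_cases hc : j'.1 < j₀'.1 + 1
    · rw [if_pos (by omega), if_pos hc] at e; omega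
    · rw [if_neg hc] at e
      by_cases hc2 : j.1 < j₀'.1 + 1
      · rw [if_pos hc2] at e; omega
      · rw [if_neg hc2] at e; omega
  rcases second_facts hm hx h0 hmin hj hnej h2 with
    ⟨hIj, hITM, hIgap⟩ | ⟨hIIj, hIITM, hIIa, hIIb⟩ <;>
  rcases second_facts hm hx' h0' hmin' hj' hnej' h2' with
    ⟨hIj', hITM', hIgap'⟩ | ⟨hIIj', hIITM', hIIa', hIIb'⟩
  · -- Case A : I, I'
    -- S x' j.1 = S x j.1 = M - 1
    have e4 := srel_base hflip hj hj' j.1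
    rw [if_neg (by omega), if_neg (by omega)] at e4
    have e5 : S x (j.1 + 1) = S x j.1 + 1 := S_succ_false hj
    have e6 := haB j.1 (by omega)
    -- M - 1 ≤ M'
    have hMlow : surplus x j₀ - 1 ≤ surplus x' j₀' := by omega
    rcases eq_or_lt_of_le hM'leM with hMeq | hMlt
    · -- M' = M : S x (j'+1) = M, one step up before contra
      have e1 := srel_base hflip hj hj' (j'.1 + 1)
      rw [if_pos (by omega), if_pos (by omega)] at e1
      have e2 : S x (j'.1 + 1) = S x j'.1 - 1 := S_succ_true hxj'
      have e3 := haA j'.1 (by omega)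
      omega
    · -- M' = M - 1
      have hMeq : surplus x' j₀' = surplus x j₀ - 1 := by omega
      -- gap' at k = j.1 forces j.1 = j₀'.1 + 1
      have hjj0' : j.1 = j₀'.1 + 1 := by
        by_contra hcc
        have := hIgap' j.1 (by omega) hcc
        omega
      -- j₀.1 < j.1 ; two subcases
      rcases eq_or_lt_of_le (show j₀.1 + 1 ≤ j.1 by omega) with hq | hq
      · -- j₀.1 + 1 = j.1 : S x j.1 = M and = M - 1
        have : S x (j₀.1 + 1) = S x j.1 := by rw [hq]
        omega
      · -- j₀.1 + 1 < j.1
        have e7 := srel_base hflip hj hj' (j₀.1 + 1)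
        rw [if_neg (by omega), if_neg (by omega)] at e7
        have e8 := haB (j₀.1 + 1) (by omega)
        omega
  · -- Case B : I, II'
    have e4 := srel_base hflip hj hj' j.1
    rw [if_neg (by omega), if_neg (by omega)] at e4
    have e5 : S x (j.1 + 1) = S x j.1 + 1 := S_succ_false hj
    have e6 := haB j.1 (by omega)
    have e7 := hIIb' (j₀.1 + 1) (by omega) (by omega)
    have e8 := srel_base hflip hj hj' (j₀.1 + 1)
    rw [if_neg (by omega), if_neg (by omega)] at e8
    omega
  · -- Case C : II, I'
    have e1 := srel_base hflip hj hj' (j'.1 + 1)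
    rw [if_pos (by omega), if_pos (by omega)] at e1
    have e2 := hIIb (j'.1 + 1) (by omega) (by omega)
    have e3 : S x (j'.1 + 1) = S x j'.1 - 1 := S_succ_true hxj'
    by_cases hq : j'.1 = j₀.1 + 1
    · -- Sub C1 : M' = M - 1
      have e5 : S x (j₀.1 + 1) = S x j'.1 := by rw [hq]
      have hMeq : surplus x' j₀' = surplus x j₀ - 1 := by omega
      by_cases hr : j.1 ≤ j₀'.1
      · have e6 := srel_base hflip hj hj' (j₀'.1 + 1)
        rw [if_pos (by omega), if_neg (by omega)] at e6
        have e7 := haA (j₀'.1 + 1) (by omega)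
        omega
      · have e6 := srel_base hflip hj hj' (j₀'.1 + 1)
        rw [if_neg (by omega), if_neg (by omega)] at e6
        have e7 := hIIa (j₀'.1 + 1) (by omega) (by omega)
        omega
    · -- Sub C2 : M' ≤ M - 2
      have e5 := hIIb j'.1 (by omega) hq
      rcases Nat.lt_or_ge j'.1 j₀.1 with hr | hr
      · -- j₀ > j' : S x' (j₀+1) = M ≤ M' contra
        have e6 := srel_base hflip hj hj' (j₀.1 + 1)
        rw [if_pos (by omega), if_pos (by omega)] at e6
        have e7 := haB (j₀.1 + 1) (by omega)
        omega
      · -- j₀ < j'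
        have hr' : j₀.1 < j'.1 := by omega
        have e6 := srel_base hflip hj hj' (j₀.1 + 1)
        rw [if_pos (by omega), if_neg (by omega)] at e6
        have e7 := haB (j₀.1 + 1) (by omega)
        have hMeq : surplus x' j₀' = surplus x j₀ - 2 := by omega
        have hq2 : j₀.1 + 1 = j₀'.1 + 1 := by
          by_contra hcc
          have := hIgap' (j₀.1 + 1) (by omega) hcc
          omega
        have e8 := hbB j.1 (by omega)
        have e9 := srel_base hflip hj hj' j.1
        rw [if_neg (by omega), if_neg (by omega)] at e9
        have e10 : S x (j.1 + 1) = S x j.1 + 1 := S_succ_false hj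
        omega
  · -- Case D : II, II'
    rcases Nat.lt_or_ge j'.1 j₀.1 with hr | hr
    · -- j₀ > j'
      have e1 := srel_base hflip hj hj' (j₀.1 + 1)
      rw [if_pos (by omega), if_pos (by omega)] at e1
      by_cases hq : j₀.1 = j₀'.1
      · -- D1 : j₀ = j₀', M = M'
        have hMeq : surplus x j₀ = surplus x' j₀' := by
          have : S x' (j₀.1 + 1) = S x' (j₀'.1 + 1) := by rw [hq]
          omega
        have e2 : S x' (j'.1 + 1) = S x' j'.1 + 1 := S_succ_false hj'
        have e3 := srel_base hflip hj hj' j'.1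
        rw [if_pos (by omega), if_neg (by omega)] at e3
        have e4 := hIIb j'.1 (by omega) (by omega)
        omega
      · have e2 := hIIb' (j₀.1 + 1) (by omega) (by omega)
        omega
    · -- j₀ < j'
      have hr' : j₀.1 < j'.1 := by omega
      have e1 := srel_base hflip hj hj' (j₀.1 + 1)
      rw [if_pos (by omega), if_neg (by omega)] at e1
      have e2 := hIIa' (j₀.1 + 1) (by omega) (by omega)
      have hMeq : surplus x' j₀' = surplus x j₀ := by omega
      have e3 := hIIb (j₀'.1 + 1) (by omega) (by omega)
      have e4 := srel_base hflip hj hj' (j₀'.1 + 1)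
      rw [if_pos (by omega), if_pos (by omega)] at e4
      omega

end Inj

section Exists
variable {n : ℕ}

lemma zeros_card (hm : m = 2 * n + 1) (hx : wt x = n) :
    (Finset.univ.filter (fun i => x i = false)).card = n + 1 := by
  rw [card_false_eq, hx, hm]; omega

lemma exists_isN (hne : (Finset.univ.filter (fun i => x i = false)).Nonempty) :
    ∃ y, IsN x y := by
  classical
  obtain ⟨j₀, hmem, hminle⟩ := Finset.exists_min_image
    (Finset.univ.filter (fun i => x i = false)) (key x) hne
  have h0 : x j₀ = false := (Finset.mem_filter.mp hmem).2
  refine ⟨flipBit x j₀, j₀, h0, ?_, rfl⟩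
  intro i hi hine
  have hle := hminle i (Finset.mem_filter.mpr ⟨Finset.mem_univ _, hi⟩)
  exact lt_of_le_of_ne hle (fun he => hine (key_injOn he).symm)

lemma exists_isM (hcard : 2 ≤ (Finset.univ.filter (fun i => x i = false)).card) :
    ∃ y, IsM x y := by
  classical
  set Z := Finset.univ.filter (fun i => x i = false) with hZ
  obtain ⟨j₀, hmem, hminle⟩ := Finset.exists_min_image Z (key x)
    (Finset.card_pos.mp (by omega))
  have h0 : x j₀ = false := (Finset.mem_filter.mp hmem).2
  have hZ'ne : (Z.erase j₀).Nonempty := by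
    apply Finset.card_pos.mp
    rw [Finset.card_erase_of_mem hmem]
    omega
  obtain ⟨j, hjmem, hjminle⟩ := Finset.exists_min_image (Z.erase j₀) (key x) hZ'ne
  have hjne : j ≠ j₀ := (Finset.mem_erase.mp hjmem).1
  have hjf : x j = false := (Finset.mem_filter.mp (Finset.mem_erase.mp hjmem).2).2
  refine ⟨flipBit x j, j₀, j, h0, hjf, hjne, ?_, ?_, rfl⟩
  · intro i hi hine
    have hle := hminle i (Finset.mem_filter.mpr ⟨Finset.mem_univ _, hi⟩)
    exact lt_of_le_of_ne hle (fun he => hine (key_injOn he).symm)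
  · intro i hi hine0 hine
    have hle := hjminle i (Finset.mem_erase.mpr
      ⟨hine0, Finset.mem_filter.mpr ⟨Finset.mem_univ _, hi⟩⟩)
    exact lt_of_le_of_ne hle (fun he => hine (key_injOn he).symm)

lemma isN_wt {y : Fin m → Bool} (hx : wt x = n) (h : IsN x y) : wt y = n + 1 := by
  obtain ⟨j, hj, _, rfl⟩ := h
  rw [wt_flip hj, hx]

lemma isM_wt {y : Fin m → Bool} (hx : wt x = n) (h : IsM x y) : wt y = n + 1 := by
  obtain ⟨j₀, j, _, hj, _, _, _, rfl⟩ := h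
  rw [wt_flip hj, hx]

lemma isN_inj {y : Fin m → Bool} (hm : m = 2 * n + 1) (hx : wt x = n) (hx' : wt x' = n)
    (h : IsN x y) (h' : IsN x' y) : x = x' := by
  obtain ⟨j, hj, hmin, hy⟩ := h
  obtain ⟨j', hj', hmin', hy'⟩ := h'
  have hflip : flipBit x j = flipBit x' j' := hy ▸ hy'
  rcases lt_trichotomy j.1 j'.1 with hlt | heq | hlt
  · exact absurd (N_aux hm hx hx' hj hmin hj' hmin' hflip hlt) id
  · have hjj : j = j' := Fin.ext heq
    calc x = flipBit (flipBit x j) j := flip_flip.symm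
    _ = flipBit (flipBit x' j') j' := by rw [hflip, hjj]
    _ = x' := flip_flip
  · exact absurd (N_aux hm hx' hx hj' hmin' hj hmin hflip.symm hlt) id

lemma isM_inj {y : Fin m → Bool} (hm : m = 2 * n + 1) (hx : wt x = n) (hx' : wt x' = n)
    (h : IsM x y) (h' : IsM x' y) : x = x' := by
  obtain ⟨j₀, j, h0, hj, hnej, hmin, h2, hy⟩ := h
  obtain ⟨j₀', j', h0', hj', hnej', hmin', h2', hy'⟩ := h'
  have hflip : flipBit x j = flipBit x' j' := hy ▸ hy'
  rcases lt_trichotomy j.1 j'.1 with hlt | heq | hlt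
  · exact absurd (M_aux hm hx hx' h0 hmin hj hnej h2 h0' hmin' hj' hnej' h2' hflip hlt) id
  · have hjj : j = j' := Fin.ext heq
    calc x = flipBit (flipBit x j) j := flip_flip.symm
    _ = flipBit (flipBit x' j') j' := by rw [hflip, hjj]
    _ = x' := flip_flip
  · exact absurd (M_aux hm hx' hx h0' hmin' hj' hnej' h2' h0 hmin hj hnej h2 hflip.symm hlt) id

end Exists

section Card

def wtEquivFinset (m k : ℕ) : {x : Fin m → Bool // wt x = k} ≃ {s : Finset (Fin m) // s.card = k} where
  toFun x := ⟨Finset.univ.filter (fun i => x.1 i = true), x.2⟩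
  invFun s := ⟨fun i => decide (i ∈ s.1), by
    rw [wt]
    have : Finset.univ.filter (fun i => decide (i ∈ s.1) = true) = s.1 := by
      ext i; simp
    rw [this, s.2]⟩
  left_inv x := by
    apply Subtype.ext
    funext i
    by_cases h : x.1 i = true <;> simp [h]
  right_inv s := by
    apply Subtype.ext
    ext i; simp

lemma card_wt (m k : ℕ) : Fintype.card {x : Fin m → Bool // wt x = k} = m.choose k := by
  rw [Fintype.card_congr (wtEquivFinset m k), Fintype.card_finset_len, Fintype.card_fin]

end Card
end MN

instance Bn.decPred (n : ℕ) : DecidablePred (· ∈ Bn n) :=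
  fun x => decidable_of_iff (wt x = n) Iff.rfl

instance Bn'.decPred (n : ℕ) : DecidablePred (· ∈ Bn' n) :=
  fun x => decidable_of_iff (wt x = n + 1) Iff.rfl


/-- The lexical matchings `M : B_n → B_n'` and `N : B_n → B_n'` are bijections. -/
theorem M_N_bijections (n : ℕ) (hn : 1 ≤ n) :
    (∃ fM : {x // x ∈ Bn n} ≃ {y // y ∈ Bn' n}, ∀ x, IsM x.1 (fM x).1) ∧
    (∃ fN : {x // x ∈ Bn n} ≃ {y // y ∈ Bn' n}, ∀ x, IsN x.1 (fN x).1) := by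
  classical
  have hcard : Fintype.card {x // x ∈ Bn n} = Fintype.card {y // y ∈ Bn' n} := by
    have h1 : Fintype.card {x // x ∈ Bn n}
        = Fintype.card {x : Fin (2*n+1) → Bool // wt x = n} :=
      Fintype.card_congr (Equiv.subtypeEquivRight (fun x => Iff.rfl))
    have h2 : Fintype.card {y // y ∈ Bn' n}
        = Fintype.card {x : Fin (2*n+1) → Bool // wt x = n + 1} :=
      Fintype.card_congr (Equiv.subtypeEquivRight (fun x => Iff.rfl))
    rw [h1, h2, MN.card_wt, MN.card_wt]
    rw [← Nat.choose_symm (by omega : n + 1 ≤ 2*n+1)]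
    congr 1
    omega
  constructor
  · have hex : ∀ x : {x // x ∈ Bn n}, ∃ y : {y // y ∈ Bn' n}, IsM x.1 y.1 := by
      intro x
      have hx : wt x.1 = n := x.2
      obtain ⟨y, hy⟩ := MN.exists_isM (x := x.1)
        (by rw [MN.zeros_card rfl hx]; omega)
      exact ⟨⟨y, MN.isM_wt hx hy⟩, hy⟩
    choose gM hgM using hex
    have hinj : Function.Injective gM := by
      intro a b hab
      apply Subtype.ext
      exact MN.isM_inj rfl a.2 b.2 (hgM a) (by rw [hab] at *; exact hgM b)
    have hbij : Function.Bijective gM :=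
      (Fintype.bijective_iff_injective_and_card gM).mpr ⟨hinj, hcard⟩
    exact ⟨Equiv.ofBijective gM hbij, fun x => hgM x⟩
  · have hex : ∀ x : {x // x ∈ Bn n}, ∃ y : {y // y ∈ Bn' n}, IsN x.1 y.1 := by
      intro x
      have hx : wt x.1 = n := x.2
      obtain ⟨y, hy⟩ := MN.exists_isN (x := x.1)
        (Finset.card_pos.mp (by rw [MN.zeros_card rfl hx]; omega))
      exact ⟨⟨y, MN.isN_wt hx hy⟩, hy⟩
    choose gN hgN using hex
    have hinj : Function.Injective gN := by
      intro a b hab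
      apply Subtype.ext
      exact MN.isN_inj rfl a.2 b.2 (hgN a) (by rw [hab] at *; exact hgN b)
    have hbij : Function.Bijective gN :=
      (Fintype.bijective_iff_injective_and_card gN).mpr ⟨hinj, hcard⟩
    exact ⟨Equiv.ofBijective gN hbij, fun x => hgN x⟩
end

section
/- For any x ∈ D_n with canonic decomposition x = (1,u,0,v), starting at x and flipping bits at the positions listed in σ(x) one after the other yields the final string y = (u,0,1,v), which lies in D_n^-. -/
/-- A Dyck word: equally many ones (`true`) and zeros (`false`), and
every prefix has at least as many ones as zeros. -/
def IsDyck (x : List Bool) : Prop :=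
  x.count true = x.count false ∧
  ∀ k : ℕ, (x.take k).count false ≤ (x.take k).count true

/-- `DyckN n` is the set of Dyck words of length `2n`. -/
def DyckN (n : ℕ) : Set (List Bool) :=
  {x | x.length = 2 * n ∧ IsDyck x}

/-- `SigmaA a x' s` holds iff the bitflip sequence `σ_a(x')` of the Dyck word
`x'` starting at position `a` (positions are 1-indexed) equals `s`:
`σ_a(()) = ()`, and for `x' = (1,u',0,v')` with `b = a + |u'| + 1`,
`σ_a(x') = (b, a, σ_{a+1}(u'), a-1, b, σ_{b+1}(v'))`. -/
inductive SigmaA : ℕ → List Bool → List ℕ → Prop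
  | nil (a : ℕ) : SigmaA a [] []
  | cons (a : ℕ) (u v : List Bool) (su sv : List ℕ) :
      IsDyck u → IsDyck v → SigmaA (a + 1) u su →
      SigmaA (a + u.length + 2) v sv →
      SigmaA a (true :: u ++ false :: v)
        ((a + u.length + 1) :: a :: su ++ (a - 1) :: (a + u.length + 1) :: sv)

/-- `SigmaSeq x s` holds iff `σ(x) = s`, where for `x` with canonic decomposition
`x = (1,u,0,v)`, `a = 1`, `b = |u| + 2`, one has `σ(x) = (b, a, σ_{a+1}(u))`. -/
def SigmaSeq (x : List Bool) (s : List ℕ) : Prop :=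
  ∃ u v su, IsDyck u ∧ IsDyck v ∧ x = true :: u ++ false :: v ∧
    SigmaA 2 u su ∧ s = (u.length + 2) :: 1 :: su

/-- `D_n⁻`: bitstrings of length `2n` with exactly `n` ones having exactly one
prefix in which the number of ones is strictly smaller than the number of zeros. -/
def DyckMinusN (n : ℕ) : Set (List Bool) :=
  {x | x.length = 2 * n ∧ x.count true = n ∧
    ((Finset.range (2 * n + 1)).filter
      (fun k => (x.take k).count true < (x.take k).count false)).card = 1}

/-- Flip the bit of `x` at the (1-indexed) position `p`. -/
def flipAt (x : List Bool) (p : ℕ) : List Bool :=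
  x.set (p - 1) (!(x.getD (p - 1) false))

/-- Apply a sequence of bitflips to `x`, one after the other. -/
def applyFlips (x : List Bool) (s : List ℕ) : List Bool :=
  s.foldl flipAt x

/-!
Write `0, 1` for `false, true`. For a Dyck word `w` occupying positions `a, …, a + |w| - 1`,
the flips `σ_a(w)` move the `0` at position `a - 1` across `w`: `0 w ↦ w 0`. Indeed, for
`w = 1 u 0 v` with `b = a + |u| + 1`, the flips `b, a` turn `0 1 u 0 v` into `0 0 u 1 v`,
then `σ_{a+1}(u)` gives `0 u 0 1 v`, the flips `a - 1, b` give `1 u 0 0 v`, and `σ_{b+1}(v)`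
gives `1 u 0 v 0`. For `σ(x)`, the flips `|u| + 2, 1` turn `x = 1 u 0 v` into `0 u 1 v`, and
`σ_2(u)` then yields `y = u 0 1 v`. As `u` and `v` are Dyck words, the only prefix of `y` with
more `0`s than `1`s is `u 0`.
-/

lemma flipAt_eq_of_eq_append_cons {x p q : List Bool} {c : Bool} {i : ℕ}
    (hx : x = p ++ c :: q) (hi : i = p.length + 1) : flipAt x i = p ++ (!c) :: q := by
  subst hx hi
  induction p with
  | nil => simp [flipAt]
  | cons b p ih => simp_all [flipAt, List.getD]

@[simp]
lemma applyFlips_cons (x : List Bool) (i : ℕ) (s : List ℕ) :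
    applyFlips x (i :: s) = applyFlips (flipAt x i) s := rfl

lemma applyFlips_append (x : List Bool) (s t : List ℕ) :
    applyFlips x (s ++ t) = applyFlips (applyFlips x s) t := List.foldl_append

section FlipPair

variable {p m q : List Bool} {c d : Bool} {i j : ℕ}

lemma applyFlips_far_near (hi : i = p.length + 1) (hj : j = p.length + m.length + 2)
    (s : List ℕ) :
    applyFlips (p ++ c :: m ++ d :: q) (j :: i :: s) =
      applyFlips (p ++ (!c) :: m ++ (!d) :: q) s := by
  rw [applyFlips_cons, applyFlips_cons,
    flipAt_eq_of_eq_append_cons (p := p ++ c :: m) rfl (by simp; omega),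
    flipAt_eq_of_eq_append_cons (p := p) (c := c) (q := m ++ (!d) :: q) (by simp) hi]
  simp

lemma applyFlips_near_far (hi : i = p.length + 1) (hj : j = p.length + m.length + 2)
    (s : List ℕ) :
    applyFlips (p ++ c :: m ++ d :: q) (i :: j :: s) =
      applyFlips (p ++ (!c) :: m ++ (!d) :: q) s := by
  rw [applyFlips_cons, applyFlips_cons,
    flipAt_eq_of_eq_append_cons (p := p) (c := c) (q := m ++ d :: q) (by simp) hi,
    flipAt_eq_of_eq_append_cons (p := p ++ (!c) :: m) (c := d) (q := q) (by simp) (by simp; omega)]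

end FlipPair

lemma SigmaA.applyFlips_eq {a : ℕ} {w : List Bool} {s : List ℕ} (h : SigmaA a w s)
    (p q : List Bool) (ha : a = p.length + 2) :
    applyFlips (p ++ false :: w ++ q) s = p ++ w ++ false :: q := by
  induction h generalizing p q with
  | nil => simp [applyFlips]
  | cons a u v su sv _ _ _ _ ihu ihv =>
    subst ha
    calc applyFlips (p ++ false :: (true :: u ++ false :: v) ++ q)
          ((p.length + 2 + u.length + 1) :: (p.length + 2) :: su ++
            (p.length + 2 - 1) :: (p.length + 2 + u.length + 1) :: sv)
        = applyFlips (p ++ [false] ++ false :: u ++ true :: (v ++ q))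
            (su ++ (p.length + 2 - 1) :: (p.length + 2 + u.length + 1) :: sv) := by
          rw [show p ++ false :: (true :: u ++ false :: v) ++ q =
            p ++ [false] ++ true :: u ++ false :: (v ++ q) by simp, List.cons_append,
            List.cons_append, applyFlips_far_near (by simp) (by simp; omega)]
          rfl
      _ = applyFlips (p ++ false :: (u ++ [false]) ++ true :: (v ++ q))
            ((p.length + 2 - 1) :: (p.length + 2 + u.length + 1) :: sv) := by
          rw [applyFlips_append, ihu _ _ (by simp)]
          simp
      _ = applyFlips (p ++ true :: u ++ [false] ++ false :: v ++ q) sv := by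
          rw [applyFlips_near_far (by omega) (by simp; omega)]
          simp
      _ = p ++ (true :: u ++ false :: v) ++ false :: q := by
          rw [ihv _ _ (by simp; omega)]
          simp

lemma IsDyck.two_mul_count_true {x : List Bool} (hx : IsDyck x) :
    2 * x.count true = x.length := by
  have := x.count_true_add_count_false
  have := hx.1
  omega

lemma IsDyck.not_length_lt_of_append_false_cons {u u' v v' : List Bool} (hu : IsDyck u)
    (hu' : IsDyck u') (h : u ++ false :: v = u' ++ false :: v') : ¬ u.length < u'.length := by
  intro hlt
  have hprefix : u'.take (u.length + 1) = u ++ [false] := by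
    have := congrArg (List.take (u.length + 1)) h
    rw [List.take_append, List.take_append_of_le_length (by omega)] at this
    simpa [List.take_of_length_le] using this.symm
  have hbalance := hu'.2 (u.length + 1)
  simp [hprefix, hu.1] at hbalance

lemma IsDyck.eq_of_append_false_cons {u u' v v' : List Bool} (hu : IsDyck u)
    (hu' : IsDyck u') (h : u ++ false :: v = u' ++ false :: v') : u = u' ∧ v = v' := by
  have hlen : u.length = u'.length := by
    have := hu.not_length_lt_of_append_false_cons hu' h
    have := hu'.not_length_lt_of_append_false_cons hu h.symm
    omega
  obtain ⟨rfl, hv⟩ := List.append_inj h hlen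
  exact ⟨rfl, List.cons_injective hv⟩

lemma IsDyck.count_take_lt_iff {u v : List Bool} (hu : IsDyck u) (hv : IsDyck v) (k : ℕ) :
    ((u ++ false :: true :: v).take k).count true <
        ((u ++ false :: true :: v).take k).count false ↔ k = u.length + 1 := by
  have hcu := hu.1
  rw [List.take_append]
  rcases lt_trichotomy k (u.length + 1) with hk | rfl | hk
  · rw [Nat.sub_eq_zero_of_le (by omega)]
    simpa [hk.ne] using hu.2 k
  · simp [List.take_of_length_le, hcu]
  · obtain ⟨m, rfl⟩ : ∃ m, k = u.length + 2 + m := ⟨k - (u.length + 2), by omega⟩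
    rw [List.take_of_length_le (by omega), show u.length + 2 + m - u.length = m + 2 by omega]
    have := hv.2 m
    simp [List.count_append]
    omega

lemma mem_dyckMinusN {n : ℕ} {u v : List Bool} (hu : IsDyck u) (hv : IsDyck v)
    (hlen : (u ++ false :: true :: v).length = 2 * n)
    (hcount : (u ++ false :: true :: v).count true = n) :
    u ++ false :: true :: v ∈ DyckMinusN n := by
  refine ⟨hlen, hcount, Finset.card_eq_one.2 ⟨u.length + 1, ?_⟩⟩
  ext k
  simp only [Finset.mem_filter, Finset.mem_range, hu.count_take_lt_iff hv, Finset.mem_singleton]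
  simp at hlen
  omega

/-- For `x ∈ D_n` with canonic decomposition `x = (1,u,0,v)`, flipping the bits
of `x` at the positions listed in `σ(x)`, one after the other, yields the final
string `y = (u,0,1,v)`, which lies in `D_n⁻`. -/
theorem sigma_endpoint (n : ℕ) (x u v : List Bool) (s : List ℕ)
    (hx : x ∈ DyckN n) (hu : IsDyck u) (hv : IsDyck v)
    (hdec : x = true :: u ++ false :: v) (hs : SigmaSeq x s) :
    applyFlips x s = u ++ false :: true :: v ∧
      (u ++ false :: true :: v) ∈ DyckMinusN n := by
  obtain ⟨u', v', su, hu', -, hdec', hsig, rfl⟩ := hs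
  obtain ⟨rfl, rfl⟩ := hu.eq_of_append_false_cons hu' (by simpa [hdec] using hdec')
  obtain ⟨hlen, hdyck⟩ := hx
  subst hdec
  constructor
  · calc applyFlips (true :: u ++ false :: v) ((u.length + 2) :: 1 :: su)
        = applyFlips ([] ++ false :: u ++ true :: v) su :=
          applyFlips_far_near (p := []) rfl (by simp) su
      _ = u ++ false :: true :: v := hsig.applyFlips_eq [] (true :: v) rfl
  · have hcount := hdyck.two_mul_count_true
    refine mem_dyckMinusN hu hv ?_ ?_ <;> simp [List.count_append] at hlen hcount ⊢ <;> omega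
end

section
/- Every vertex sequence P_σ(x)∘0, obtained from x ∈ D_n by appending 0 and applying the bitflips of σ(x) to the first 2n coordinates, is a path in the middle levels graph G_n: consecutive strings differ in exactly one bit, all strings have weight n or n+1, and all vertices are distinct. -/
/-- Number of positions where two bitstrings differ. -/
def diffCount (a b : List Bool) : ℕ :=
  (List.zipWith (fun s t => s != t) a b).count true

/-!
The flips of `σ_a(y)` stay inside the window of positions `a - 1, …, a + |y| - 1`, which
initially reads `0y`, and rotate it to `y0` along distinct strings, each of the weight of `y` or
one more, that avoid `1y`. This follows by induction along `y = 1u0v`: the window runs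
through `01u0v, 01u1v`, then `0·(walk of u)·1v` from `00u1v` to `0u01v`, then `1u01v` and
`1u0·(walk of v)` from `1u00v`. Strings before and after the flip at `a - 1` differ in the
first bit, and inside each block distinctness is inherited, with the avoided `1u` (resp. `1v`)
accounting for the block's first string. For `x = 1u0v`, `σ(x)` walks exactly through the part
of this walk before the flip at `a - 1`, without the window bit.
-/

theorem flipAt_append_cons {w w' : List Bool} {b : Bool} {p : ℕ} (hp : p = w.length + 1) :
    flipAt (w ++ b :: w') p = w ++ (!b) :: w' := by
  subst hp
  simp [flipAt, List.set_append_right]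

theorem diffCount_append {a b : List Bool} (a' b' : List Bool) (h : a.length = b.length) :
    diffCount (a ++ a') (b ++ b') = diffCount a b + diffCount a' b' := by
  simp only [diffCount, List.zipWith_append h, List.count_append]

@[simp]
theorem diffCount_cons_cons (c d : Bool) (a b : List Bool) :
    diffCount (c :: a) (d :: b) = (if c = d then 0 else 1) + diffCount a b := by
  cases c <;> cases d <;> simp [diffCount] <;> omega

@[simp]
theorem diffCount_self (z : List Bool) : diffCount z z = 0 := by
  induction z with
  | nil => rfl
  | cons c z ih => simp [ih]

theorem diffCount_append_left (w a b : List Bool) :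
    diffCount (w ++ a) (w ++ b) = diffCount a b := by
  rw [diffCount_append _ _ rfl, diffCount_self, zero_add]

theorem diffCount_append_right {a b : List Bool} (w : List Bool) (h : a.length = b.length) :
    diffCount (a ++ w) (b ++ w) = diffCount a b := by
  rw [diffCount_append _ _ h, diffCount_self, add_zero]

theorem diffCount_flip (w w' : List Bool) (b : Bool) :
    diffCount (w ++ b :: w') (w ++ (!b) :: w') = 1 := by
  simp [diffCount_append_left]

section Chains

variable {T : List (List Bool)}

theorem isChain_map_append_left (w : List Bool) (hT : T.IsChain (diffCount · · = 1)) :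
    (T.map (w ++ ·)).IsChain (diffCount · · = 1) :=
  (List.isChain_map _).2 (hT.imp fun p q h => by rwa [diffCount_append_left])

theorem isChain_map_append_right {m : ℕ} (w : List Bool) (hlen : ∀ z ∈ T, z.length = m)
    (hT : T.IsChain (diffCount · · = 1)) :
    (T.map (· ++ w)).IsChain (diffCount · · = 1) :=
  (List.isChain_map _).2 <| hT.imp_of_mem_imp fun p q hp hq h => by
    rwa [diffCount_append_right w ((hlen p hp).trans (hlen q hq).symm)]

end Chains

/-- `T` is the list of strings traversed by the flips `s = σ_a(x)`, read on the window of
positions `a - 1, …, a + |x| - 1`, which initially holds `0x`; the flips never leave the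
window. -/
structure IsSigmaWalk (a : ℕ) (x : List Bool) (s : List ℕ) (T : List (List Bool)) : Prop where
  scanl_eq : ∀ w₁ w₂ : List Bool, w₁.length + 2 = a →
    List.scanl flipAt (w₁ ++ false :: x ++ w₂) s = T.map (fun z => w₁ ++ z ++ w₂)
  head?_eq : T.head? = some (false :: x)
  getLast?_eq : T.getLast? = some (x ++ [false])
  length_eq : ∀ z ∈ T, z.length = x.length + 1
  count_true : ∀ z ∈ T, z.count true = x.count true ∨ z.count true = x.count true + 1
  true_cons_not_mem : true :: x ∉ T
  isChain : T.IsChain (diffCount · · = 1)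
  nodup : T.Nodup

namespace IsSigmaWalk

variable {a : ℕ} {x : List Bool} {s : List ℕ} {T : List (List Bool)}

theorem nil (a : ℕ) : IsSigmaWalk a [] [] [[false]] where
  scanl_eq _ _ _ := by simp
  head?_eq := rfl
  getLast?_eq := rfl
  length_eq := by simp
  count_true := by simp
  true_cons_not_mem := by simp
  isChain := List.isChain_singleton _
  nodup := List.nodup_singleton _

theorem length_eq_of_mem_cons_true (h : IsSigmaWalk a x s T) :
    ∀ z ∈ (true :: x) :: T, z.length = x.length + 1 := by
  simpa using h.length_eq

theorem isChain_cons_true (h : IsSigmaWalk a x s T) :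
    ((true :: x) :: T).IsChain (diffCount · · = 1) :=
  List.isChain_cons.2 ⟨by simp [h.head?_eq], h.isChain⟩

theorem nodup_cons_true (h : IsSigmaWalk a x s T) : ((true :: x) :: T).Nodup :=
  List.nodup_cons.2 ⟨h.true_cons_not_mem, h.nodup⟩

end IsSigmaWalk

/-- The strings visited by the flips `b, a, σ_{a+1}(u)` from `1u0v`, where `b` is the position of
the `0` after `u` and `Tu` is the walk of `σ_{a+1}(u)`. -/
def sigmaPath (u v : List Bool) (Tu : List (List Bool)) : List (List Bool) :=
  (true :: u ++ false :: v) :: ((true :: u) :: Tu).map (· ++ true :: v)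

section SigmaPath

variable {a : ℕ} {u v : List Bool} {su : List ℕ} {Tu : List (List Bool)}

theorem scanl_flipAt_sigmaPath (hu : IsSigmaWalk (a + 1) u su Tu) {w₁ w₂ : List Bool}
    (hw₁ : w₁.length + 1 = a) :
    List.scanl flipAt (w₁ ++ (true :: u ++ false :: v) ++ w₂) ((a + u.length + 1) :: a :: su) =
      (sigmaPath u v Tu).map (fun z => w₁ ++ z ++ w₂) := by
  have flip_b : flipAt (w₁ ++ (true :: u ++ false :: v) ++ w₂) (a + u.length + 1) =
      w₁ ++ (true :: u ++ true :: v) ++ w₂ := by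
    simpa using flipAt_append_cons (w := w₁ ++ true :: u) (b := false) (w' := v ++ w₂)
      (by simp; omega)
  have flip_a : flipAt (w₁ ++ (true :: u ++ true :: v) ++ w₂) a =
      w₁ ++ false :: u ++ (true :: v ++ w₂) := by
    simpa using flipAt_append_cons (w := w₁) (b := true) (w' := u ++ true :: (v ++ w₂))
      (by omega)
  rw [List.scanl_cons, flip_b, List.scanl_cons, flip_a, hu.scanl_eq _ _ (by omega)]
  simp [sigmaPath]

theorem getLast?_sigmaPath (hu : IsSigmaWalk a u su Tu) :
    (sigmaPath u v Tu).getLast? = some (u ++ false :: true :: v) := by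
  rw [sigmaPath, List.getLast?_cons, List.getLast?_map, List.getLast?_cons, hu.getLast?_eq]
  simp

theorem length_of_mem_sigmaPath (hu : IsSigmaWalk a u su Tu) :
    ∀ z ∈ sigmaPath u v Tu, z.length = u.length + v.length + 2 := by
  intro z hz
  simp only [sigmaPath, List.map_cons, List.mem_cons, List.mem_map] at hz
  rcases hz with rfl | rfl | ⟨z, hz, rfl⟩
  · simp; omega
  · simp; omega
  · simp [hu.length_eq z hz]; omega

theorem count_true_of_mem_sigmaPath (hu : IsSigmaWalk a u su Tu) :
    ∀ z ∈ sigmaPath u v Tu, z.count true = u.count true + v.count true + 1 ∨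
      z.count true = u.count true + v.count true + 2 := by
  intro z hz
  simp only [sigmaPath, List.map_cons, List.mem_cons, List.mem_map] at hz
  rcases hz with rfl | rfl | ⟨z, hz, rfl⟩
  · simp
  · simp; omega
  · rcases hu.count_true z hz with h | h <;> simp [h] <;> omega

theorem isChain_sigmaPath (hu : IsSigmaWalk a u su Tu) :
    (sigmaPath u v Tu).IsChain (diffCount · · = 1) := by
  refine List.isChain_cons.2 ⟨?_, isChain_map_append_right _ hu.length_eq_of_mem_cons_true
    hu.isChain_cons_true⟩
  simpa using diffCount_flip (true :: u) v false

theorem nodup_sigmaPath (hu : IsSigmaWalk a u su Tu) : (sigmaPath u v Tu).Nodup := by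
  refine List.nodup_cons.2 ⟨?_, hu.nodup_cons_true.map (List.append_left_injective _)⟩
  simp only [List.mem_map, not_exists, not_and]
  intro z hz hzx
  have := (List.append_inj' (s₁ := z) (s₂ := true :: u) hzx rfl).2
  simp at this

end SigmaPath

/-- The walk of `σ_a(1u0v)` on its window `01u0v`: after `sigmaPath` (behind a `0`), the flip at
`a - 1` and the walk `Tv` of `σ_{b+1}(v)` follow. -/
def sigmaWalk (u v : List Bool) (Tu Tv : List (List Bool)) : List (List Bool) :=
  (sigmaPath u v Tu).map (false :: ·) ++ ((true :: v) :: Tv).map ((true :: u ++ [false]) ++ ·)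

section SigmaWalk

variable {a a' : ℕ} {u v : List Bool} {su sv : List ℕ} {Tu Tv : List (List Bool)}

theorem scanl_flipAt_sigmaWalk (hu : IsSigmaWalk (a + 1) u su Tu)
    (hv : IsSigmaWalk (a + u.length + 2) v sv Tv) {w₁ w₂ : List Bool}
    (hw₁ : w₁.length + 2 = a) :
    List.scanl flipAt (w₁ ++ false :: (true :: u ++ false :: v) ++ w₂)
        ((a + u.length + 1) :: a :: su ++ (a - 1) :: (a + u.length + 1) :: sv) =
      (sigmaWalk u v Tu Tv).map (fun z => w₁ ++ z ++ w₂) := by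
  have first := scanl_flipAt_sigmaPath (v := v) hu (w₁ := w₁ ++ [false]) (w₂ := w₂)
    (by simp; omega)
  have fold_first : List.foldl flipAt (w₁ ++ [false] ++ (true :: u ++ false :: v) ++ w₂)
      ((a + u.length + 1) :: a :: su) = w₁ ++ false :: u ++ false :: true :: v ++ w₂ := by
    have last := List.getLast?_scanl (f := flipAt)
      (b := w₁ ++ [false] ++ (true :: u ++ false :: v) ++ w₂)
      (l := (a + u.length + 1) :: a :: su)
    rw [first, List.getLast?_map, getLast?_sigmaPath hu] at last
    simpa using last.symm
  have flip_a : flipAt (w₁ ++ false :: u ++ false :: true :: v ++ w₂) (a - 1) =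
      w₁ ++ true :: u ++ false :: true :: v ++ w₂ := by
    simpa using flipAt_append_cons (w := w₁) (b := false)
      (w' := u ++ false :: true :: (v ++ w₂)) (by omega)
  have flip_b : flipAt (w₁ ++ true :: u ++ false :: true :: v ++ w₂) (a + u.length + 1) =
      w₁ ++ (true :: u ++ [false]) ++ false :: v ++ w₂ := by
    simpa using flipAt_append_cons (w := w₁ ++ true :: u ++ [false]) (b := true)
      (w' := v ++ w₂) (by simp; omega)
  rw [show w₁ ++ false :: (true :: u ++ false :: v) ++ w₂ =
      w₁ ++ [false] ++ (true :: u ++ false :: v) ++ w₂ by simp, List.scanl_append, first,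
    fold_first, List.scanl_cons, List.tail_cons, flip_a, List.scanl_cons, flip_b,
    hv.scanl_eq _ _ (by simp; omega)]
  simp [sigmaWalk, Function.comp_def]

theorem mem_sigmaWalk {z : List Bool} :
    z ∈ sigmaWalk u v Tu Tv ↔
      (∃ y ∈ sigmaPath u v Tu, false :: y = z) ∨
        ∃ y ∈ (true :: v) :: Tv, true :: u ++ [false] ++ y = z := by
  simp only [sigmaWalk, List.mem_append, List.mem_map]

theorem isChain_sigmaWalk (hu : IsSigmaWalk a u su Tu) (hv : IsSigmaWalk a' v sv Tv) :
    (sigmaWalk u v Tu Tv).IsChain (diffCount · · = 1) := by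
  refine List.isChain_append.2 ⟨isChain_map_append_left [false] (isChain_sigmaPath hu),
    isChain_map_append_left _ hv.isChain_cons_true, ?_⟩
  simp [List.getLast?_map, getLast?_sigmaPath hu]

theorem nodup_sigmaWalk (hu : IsSigmaWalk a u su Tu) (hv : IsSigmaWalk a' v sv Tv) :
    (sigmaWalk u v Tu Tv).Nodup := by
  refine List.nodup_append.2 ⟨(nodup_sigmaPath hu).map List.cons_injective,
    hv.nodup_cons_true.map (List.append_right_injective _), ?_⟩
  simp

theorem IsSigmaWalk.cons (hu : IsSigmaWalk (a + 1) u su Tu)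
    (hv : IsSigmaWalk (a + u.length + 2) v sv Tv) :
    IsSigmaWalk a (true :: u ++ false :: v)
      ((a + u.length + 1) :: a :: su ++ (a - 1) :: (a + u.length + 1) :: sv)
      (sigmaWalk u v Tu Tv) where
  scanl_eq _ _ := scanl_flipAt_sigmaWalk hu hv
  head?_eq := by simp [sigmaWalk, sigmaPath]
  getLast?_eq := by
    rw [sigmaWalk, List.getLast?_append, List.getLast?_map, List.getLast?_cons, hv.getLast?_eq]
    simp
  length_eq z hz := by
    rcases mem_sigmaWalk.1 hz with ⟨y, hy, rfl⟩ | ⟨y, hy, rfl⟩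
    · simp [length_of_mem_sigmaPath hu y hy]; omega
    · simp [hv.length_eq_of_mem_cons_true y hy]; omega
  count_true z hz := by
    rcases mem_sigmaWalk.1 hz with ⟨y, hy, rfl⟩ | ⟨y, hy, rfl⟩
    · rcases count_true_of_mem_sigmaPath hu y hy with h | h <;> simp [h]
    · rcases List.mem_cons.1 hy with rfl | hy
      · simp; omega
      · rcases hv.count_true y hy with h | h <;> simp [h, add_assoc]
  true_cons_not_mem hz := by
    rcases mem_sigmaWalk.1 hz with ⟨y, -, hy⟩ | ⟨y, hy, hyz⟩
    · simp at hy
    · -- `1u0` and `11u` have the same length but different weights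
      have := congrArg (List.count true) (List.append_inj (s₁ := true :: u ++ [false])
        (s₂ := true :: true :: u) (t₂ := false :: v) hyz (by simp)).1
      simp at this
  isChain := isChain_sigmaWalk hu hv
  nodup := nodup_sigmaWalk hu hv

end SigmaWalk

theorem SigmaA.exists_isSigmaWalk {a : ℕ} {x : List Bool} {s : List ℕ} (h : SigmaA a x s) :
    ∃ T, IsSigmaWalk a x s T := by
  induction h with
  | nil a => exact ⟨_, IsSigmaWalk.nil a⟩
  | cons a u v su sv _ _ _ _ ihu ihv =>
    obtain ⟨Tu, hu⟩ := ihu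
    obtain ⟨Tv, hv⟩ := ihv
    exact ⟨_, hu.cons hv⟩

/-- For `x ∈ D_n`, the vertex sequence `P_σ(x)∘0` — obtained by appending a 0
to `x` and to each string reached from `x` by applying the flips of `σ(x)` one
after the other — is a path in the middle levels graph `G_n`: all its strings
have length `2n+1` and weight `n` or `n+1`, consecutive strings differ in
exactly one bit, and all strings are distinct. -/
theorem sigma_path (n : ℕ) (x : List Bool) (s : List ℕ)
    (hx : x ∈ DyckN n) (hs : SigmaSeq x s) :
    ∀ P : List (List Bool),
      P = (List.scanl flipAt x s).map (fun y => y ++ [false]) →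
      (∀ y ∈ P, y.length = 2 * n + 1 ∧ (y.count true = n ∨ y.count true = n + 1)) ∧
      List.Chain' (fun a b => diffCount a b = 1) P ∧
      P.Nodup := by
  rintro P rfl
  obtain ⟨hlen, hbalanced, -⟩ := hx
  obtain ⟨u, v, su, -, -, rfl, hsu, rfl⟩ := hs
  obtain ⟨Tu, hu⟩ := hsu.exists_isSigmaWalk
  have hweight : u.count true + v.count true + 1 = n := by
    have hsum := List.count_true_add_count_false (true :: u ++ false :: v)
    have hx_weight : (true :: u ++ false :: v).count true = n := by omega
    simpa using hx_weight
  have hpath : List.scanl flipAt (true :: u ++ false :: v) ((u.length + 2) :: 1 :: su) =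
      sigmaPath u v Tu := by
    rw [show u.length + 2 = 1 + u.length + 1 by omega]
    simpa using scanl_flipAt_sigmaPath (a := 1) (v := v) hu (w₁ := []) (w₂ := []) rfl
  rw [hpath]
  refine ⟨fun _ hz => ?_, isChain_map_append_right _ (length_of_mem_sigmaPath hu)
    (isChain_sigmaPath hu), (nodup_sigmaPath hu).map (List.append_left_injective _)⟩
  obtain ⟨y, hy, rfl⟩ := List.mem_map.1 hz
  simp only [List.length_append, List.length_cons] at hlen
  refine ⟨by simp [length_of_mem_sigmaPath hu y hy]; omega, ?_⟩
  rcases count_true_of_mem_sigmaPath hu y hy with h | h <;> simp [h] <;> omega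
end

section
/- For any two distinct flippable pairs (x,y) and (x',y'), the corresponding 6-cycles C_6(x,y)∘0 and C_6(x',y')∘0 in the middle levels graph G_n are edge-disjoint. -/
/-- `(x,y)` is a flippable pair:
`x = (1,u_1,1,u_2,…,1,u_d,1,1,0,w,0,v_d,0,…,v_1,0,v_0)` and
`y = (1,u_1,1,u_2,…,1,u_d,1,0,1,w,0,v_d,0,…,v_1,0,v_0)` for some `d ≥ 0` and
Dyck words `u_1,…,u_d,v_0,…,v_d,w`.  Here `us = [u_1,…,u_d]` and
`vs = [v_d,…,v_1]` (in order of appearance). -/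
def Flippable (x y : List Bool) : Prop :=
  ∃ (us vs : List (List Bool)) (w v0 : List Bool),
    us.length = vs.length ∧
    (∀ u ∈ us, IsDyck u) ∧ (∀ v ∈ vs, IsDyck v) ∧ IsDyck w ∧ IsDyck v0 ∧
    x = (us.map (fun u => true :: u)).flatten ++ [true, true, false] ++ w ++
        [false] ++ (vs.map (fun v => v ++ [false])).flatten ++ v0 ∧
    y = (us.map (fun u => true :: u)).flatten ++ [true, false, true] ++ w ++
        [false] ++ (vs.map (fun v => v ++ [false])).flatten ++ v0

/-- A substitution for the three stars: any of the six `{0,1}`-combinations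
using each symbol at least once. -/
def Admissible (s : Bool × Bool × Bool) : Prop :=
  s ≠ (false, false, false) ∧ s ≠ (true, true, true)

/-- Substitute the three stars of the string `(pre, *, *, w, *, post)`. -/
def fillStars (pre w post : List Bool) (s : Bool × Bool × Bool) : List Bool :=
  pre ++ s.1 :: s.2.1 :: (w ++ s.2.2 :: post)

/-- Two star substitutions differing in exactly one of the three symbols. -/
def StarAdj (s t : Bool × Bool × Bool) : Prop :=
  (s.1 ≠ t.1 ∧ s.2.1 = t.2.1 ∧ s.2.2 = t.2.2) ∨
  (s.1 = t.1 ∧ s.2.1 ≠ t.2.1 ∧ s.2.2 = t.2.2) ∨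
  (s.1 = t.1 ∧ s.2.1 = t.2.1 ∧ s.2.2 ≠ t.2.2)

/-- The edge set of the 6-cycle encoded by the string `(pre, *, *, w, *, post)`. -/
def C6EdgeSet (pre w post : List Bool) : Set (Sym2 (List Bool)) :=
  {e | ∃ s t, Admissible s ∧ Admissible t ∧ StarAdj s t ∧
    e = s(fillStars pre w post s, fillStars pre w post t)}

/-- `FlipData x y E` : `(x,y)` is a flippable pair and `E` is the edge set of
the associated 6-cycle `C_6(x,y)∘0`, encoded by the star string
`(u_1,0,…,u_d,0,1,*,*,w,*,v_d,1,…,v_1,1,v_0,0)`. -/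
def FlipData (x y : List Bool) (E : Set (Sym2 (List Bool))) : Prop :=
  ∃ (us vs : List (List Bool)) (w v0 : List Bool),
    us.length = vs.length ∧
    (∀ u ∈ us, IsDyck u) ∧ (∀ v ∈ vs, IsDyck v) ∧ IsDyck w ∧ IsDyck v0 ∧
    x = (us.map (fun u => true :: u)).flatten ++ [true, true, false] ++ w ++
        [false] ++ (vs.map (fun v => v ++ [false])).flatten ++ v0 ∧
    y = (us.map (fun u => true :: u)).flatten ++ [true, false, true] ++ w ++
        [false] ++ (vs.map (fun v => v ++ [false])).flatten ++ v0 ∧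
    E = C6EdgeSet ((us.map (fun u => u ++ [false])).flatten ++ [true]) w
        ((vs.map (fun v => v ++ [true])).flatten ++ v0 ++ [false])

/-! Every edge of a 6-cycle joins a star substitution with two ones to one with a single one,
so comparing numbers of ones shows that a common edge of two cycles yields a common vertex which
is a weight-two substitution in both. Such a vertex `u_1 0 … u_d 0 1 a b w c v_d 1 … v_1 1 v_0 0`
determines the flippable pair. Track the height (ones minus zeros) of prefixes: each `u_i 0`
ends where the walk first drops below the level it started from, while from the `1` after
`u_d 0` on the walk never returns below that level, because the stars carry two ones. After the
stars, `w` ends at its first drop below its starting level if `c = 0`, and at its last visit to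
that level if `c = 1`. Finally `v_d 1 … v_1 1 v_0` has height `d` and never drops below its
start, so the `v_i` peel off one at a time in the same way. -/

def height (l : List Bool) : ℤ := l.count true - l.count false

@[simp] theorem height_nil : height [] = 0 := by simp [height]

@[simp] theorem height_cons_true (l : List Bool) : height (true :: l) = height l + 1 := by
  simp [height]; ring

@[simp] theorem height_cons_false (l : List Bool) : height (false :: l) = height l - 1 := by
  simp [height]; ring

@[simp] theorem height_append (a b : List Bool) : height (a ++ b) = height a + height b := by
  simp [height, List.count_append]; ring

def PrefixGe (c : ℤ) (l : List Bool) : Prop := ∀ k, c ≤ height (l.take k)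

theorem PrefixGe.nonpos {c : ℤ} {l : List Bool} (h : PrefixGe c l) : c ≤ 0 := by
  simpa using h 0

theorem PrefixGe.mono {c c' : ℤ} {l : List Bool} (h : PrefixGe c l) (hc : c' ≤ c) :
    PrefixGe c' l :=
  fun k => hc.trans (h k)

theorem prefixGe_cons {c : ℤ} {b : Bool} {l : List Bool} :
    PrefixGe c (b :: l) ↔ c ≤ 0 ∧ PrefixGe (c - height [b]) l := by
  refine ⟨fun h => ⟨h.nonpos, fun k => ?_⟩, fun ⟨h0, h⟩ k => ?_⟩
  · have := h (k + 1)
    cases b <;> simp at this ⊢ <;> linarith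
  · cases k with
    | zero => simpa using h0
    | succ k => have := h k; cases b <;> simp at this ⊢ <;> linarith

theorem prefixGe_append {c : ℤ} {a b : List Bool} :
    PrefixGe c (a ++ b) ↔ PrefixGe c a ∧ PrefixGe (c - height a) b := by
  refine ⟨fun h => ⟨fun k => ?_, fun k => ?_⟩, fun ⟨ha, hb⟩ k => ?_⟩
  · rcases le_total k a.length with hk | hk
    · simpa [List.take_append_of_le_length hk] using h k
    · simpa [List.take_of_length_le hk] using h a.length
  · have := h (a.length + k)
    rw [List.take_length_add_append, height_append] at this
    linarith
  · rw [List.take_append, height_append]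
    rcases le_total k a.length with hk | hk
    · simpa [Nat.sub_eq_zero_of_le hk] using ha k
    · have := hb (k - a.length)
      rw [List.take_of_length_le hk]
      linarith

theorem IsDyck.height_eq_zero {a : List Bool} (h : IsDyck a) : height a = 0 := by
  simp [height, h.1]

theorem IsDyck.prefixGe {a : List Bool} (h : IsDyck a) : PrefixGe 0 a := by
  intro k
  have := h.2 k
  simp only [height]
  omega

theorem IsDyck.not_prefixGe_append_false {a r : List Bool} (ha : IsDyck a) :
    ¬ PrefixGe 0 (a ++ false :: r) := by
  rw [prefixGe_append, prefixGe_cons, ha.height_eq_zero]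
  rintro ⟨-, -, h⟩
  exact absurd h.nonpos (by norm_num)

/-- `hP` says that `P` singles out one occurrence of `b`: a later occurrence never splits the
list into parts satisfying `P` as well. -/
theorem append_cons_inj_of_unique_split {α : Type*} {P : List α → List α → Prop} {b : α}
    (hP : ∀ a m r, P a (m ++ b :: r) → ¬ P (a ++ b :: m) r)
    {a a' r r' : List α} (ha : P a r) (ha' : P a' r') (h : a ++ b :: r = a' ++ b :: r') :
    a = a' ∧ r = r' := by
  rcases List.append_eq_append_iff.mp h with ⟨_ | ⟨c, m⟩, rfl, hm⟩ | ⟨_ | ⟨c, m⟩, rfl, hm⟩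
  · simpa using hm
  · obtain ⟨rfl, rfl⟩ := List.cons_eq_cons.mp hm
    exact absurd ha' (hP a m r' ha)
  · simpa using hm.symm
  · obtain ⟨rfl, rfl⟩ := List.cons_eq_cons.mp hm
    exact absurd ha (hP a' m r ha')

theorem IsDyck.append_false_inj {a a' r r' : List Bool} (ha : IsDyck a) (ha' : IsDyck a')
    (h : a ++ false :: r = a' ++ false :: r') : a = a' ∧ r = r' :=
  append_cons_inj_of_unique_split (P := fun a _ => IsDyck a)
    (fun _ _ _ ha had => ha.not_prefixGe_append_false had.prefixGe) ha ha' h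

theorem append_true_inj_of_prefixGe {a a' r r' : List Bool} (ha : height a = 0)
    (ha' : height a' = 0) (hr : PrefixGe 0 r) (hr' : PrefixGe 0 r')
    (h : a ++ true :: r = a' ++ true :: r') : a = a' ∧ r = r' := by
  refine append_cons_inj_of_unique_split (P := fun a r => height a = 0 ∧ PrefixGe 0 r)
    (fun a m r ⟨ha, hr⟩ ⟨ham, _⟩ => ?_) ⟨ha, hr⟩ ⟨ha', hr'⟩ h
  have := (prefixGe_append.mp hr).2.nonpos
  simp [ha] at ham
  linarith

def downJoin (us : List (List Bool)) : List Bool :=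
  (us.map (fun u => u ++ [false])).flatten

def upJoin (vs : List (List Bool)) (v0 : List Bool) : List Bool :=
  (vs.map (fun v => v ++ [true])).flatten ++ v0

@[simp] theorem downJoin_nil : downJoin [] = [] := rfl

@[simp] theorem downJoin_cons (u : List Bool) (us : List (List Bool)) :
    downJoin (u :: us) = u ++ false :: downJoin us := by
  simp [downJoin]

@[simp] theorem upJoin_nil (v0 : List Bool) : upJoin [] v0 = v0 := rfl

@[simp] theorem upJoin_cons (v : List Bool) (vs : List (List Bool)) (v0 : List Bool) :
    upJoin (v :: vs) v0 = v ++ true :: upJoin vs v0 := by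
  simp [upJoin]

theorem downJoin_append_inj {us us' : List (List Bool)} {r r' : List Bool}
    (hus : ∀ u ∈ us, IsDyck u) (hus' : ∀ u ∈ us', IsDyck u)
    (hr : PrefixGe 0 r) (hr' : PrefixGe 0 r') (h : downJoin us ++ r = downJoin us' ++ r') :
    us = us' ∧ r = r' := by
  induction us generalizing us' with
  | nil =>
    cases us' with
    | nil => exact ⟨rfl, h⟩
    | cons u' us' =>
      simp only [downJoin_nil, List.nil_append, downJoin_cons, List.append_assoc,
        List.cons_append] at h
      exact absurd (h ▸ hr) (hus' u' (by simp)).not_prefixGe_append_false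
  | cons u us ih =>
    cases us' with
    | nil =>
      simp only [downJoin_nil, List.nil_append, downJoin_cons, List.append_assoc,
        List.cons_append] at h
      exact absurd (h ▸ hr') (hus u (by simp)).not_prefixGe_append_false
    | cons u' us' =>
      simp only [downJoin_cons, List.append_assoc, List.cons_append] at h
      obtain ⟨rfl, htail⟩ := (hus u (by simp)).append_false_inj (hus' u' (by simp)) h
      obtain ⟨rfl, rfl⟩ := ih (fun v hv => hus v (by simp [hv]))
        (fun v hv => hus' v (by simp [hv])) htail
      exact ⟨rfl, rfl⟩

theorem height_upJoin {vs : List (List Bool)} {v0 : List Bool} (hvs : ∀ v ∈ vs, IsDyck v)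
    (hv0 : IsDyck v0) : height (upJoin vs v0) = vs.length := by
  induction vs with
  | nil => simpa using hv0.height_eq_zero
  | cons v vs ih =>
    simp [(hvs v (by simp)).height_eq_zero, ih (fun v hv => hvs v (by simp [hv]))]

theorem prefixGe_upJoin {vs : List (List Bool)} {v0 : List Bool} (hvs : ∀ v ∈ vs, IsDyck v)
    (hv0 : IsDyck v0) : PrefixGe 0 (upJoin vs v0) := by
  induction vs with
  | nil => exact hv0.prefixGe
  | cons v vs ih =>
    have hv := hvs v (by simp)
    rw [upJoin_cons, prefixGe_append, prefixGe_cons, hv.height_eq_zero]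
    exact ⟨hv.prefixGe, le_rfl, (ih fun v hv => hvs v (by simp [hv])).mono (by simp)⟩

theorem upJoin_inj {vs vs' : List (List Bool)} {v0 v0' : List Bool}
    (hvs : ∀ v ∈ vs, IsDyck v) (hv0 : IsDyck v0) (hvs' : ∀ v ∈ vs', IsDyck v)
    (hv0' : IsDyck v0') (h : upJoin vs v0 = upJoin vs' v0') : vs = vs' ∧ v0 = v0' := by
  have hlen : vs.length = vs'.length := by
    exact_mod_cast (height_upJoin hvs hv0).symm.trans (h ▸ height_upJoin hvs' hv0')
  induction vs generalizing vs' with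
  | nil => cases vs' <;> simp_all
  | cons v vs ih =>
    cases vs' with
    | nil => simp at hlen
    | cons v' vs' =>
      have hrest : ∀ u ∈ vs, IsDyck u := fun u hu => hvs u (by simp [hu])
      have hrest' : ∀ u ∈ vs', IsDyck u := fun u hu => hvs' u (by simp [hu])
      rw [upJoin_cons, upJoin_cons] at h
      obtain ⟨rfl, htail⟩ := append_true_inj_of_prefixGe (hvs v (by simp)).height_eq_zero
        (hvs' v' (by simp)).height_eq_zero (prefixGe_upJoin hrest hv0)
        (prefixGe_upJoin hrest' hv0') h
      obtain ⟨rfl, rfl⟩ := ih hrest hrest' htail (by simpa using hlen)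
      exact ⟨rfl, rfl⟩

def starWeight (s : Bool × Bool × Bool) : ℕ := [s.1, s.2.1, s.2.2].count true

theorem count_true_fillStars (pre w post : List Bool) (s : Bool × Bool × Bool) :
    (fillStars pre w post s).count true
      = pre.count true + w.count true + post.count true + starWeight s := by
  obtain ⟨a, b, c⟩ := s
  cases a <;> cases b <;> cases c <;> simp [fillStars, starWeight] <;> omega

theorem starWeight_of_starAdj {s t : Bool × Bool × Bool} (hs : Admissible s) (ht : Admissible t)
    (hst : StarAdj s t) :
    (starWeight s = 2 ∧ starWeight t = 1) ∨ (starWeight s = 1 ∧ starWeight t = 2) := by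
  revert hs ht hst
  unfold Admissible StarAdj
  rcases s with ⟨_ | _, _ | _, _ | _⟩ <;> rcases t with ⟨_ | _, _ | _, _ | _⟩ <;> decide

theorem exists_starWeight_of_mem_C6EdgeSet {pre w post : List Bool} {e : Sym2 (List Bool)}
    (he : e ∈ C6EdgeSet pre w post) : ∃ s t, starWeight s = 2 ∧ starWeight t = 1 ∧
      e = s(fillStars pre w post s, fillStars pre w post t) := by
  obtain ⟨s, t, hs, ht, hst, rfl⟩ := he
  rcases starWeight_of_starAdj hs ht hst with ⟨h2, h1⟩ | ⟨h1, h2⟩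
  · exact ⟨s, t, h2, h1, rfl⟩
  · exact ⟨t, s, h2, h1, Sym2.eq_swap⟩

theorem exists_starWeight_two_fillStars_eq {pre w post pre' w' post' : List Bool}
    {e : Sym2 (List Bool)} (he : e ∈ C6EdgeSet pre w post) (he' : e ∈ C6EdgeSet pre' w' post') :
    ∃ s s', starWeight s = 2 ∧ starWeight s' = 2 ∧
      fillStars pre w post s = fillStars pre' w' post' s' := by
  obtain ⟨s, t, hs, ht, rfl⟩ := exists_starWeight_of_mem_C6EdgeSet he
  obtain ⟨s', t', hs', ht', he'⟩ := exists_starWeight_of_mem_C6EdgeSet he'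
  rcases Sym2.eq_iff.mp he' with ⟨hss, -⟩ | ⟨hst, hts⟩
  · exact ⟨s, s', hs, hs', hss⟩
  · have c1 := congrArg (List.count true) hst
    have c2 := congrArg (List.count true) hts
    simp only [count_true_fillStars] at c1 c2
    omega

def starTail (s : Bool × Bool × Bool) (w M : List Bool) : List Bool :=
  true :: s.1 :: s.2.1 :: (w ++ s.2.2 :: M)

theorem fillStars_eq_starTail (D w M : List Bool) (s : Bool × Bool × Bool) :
    fillStars (D ++ [true]) w (M ++ [false]) s = D ++ starTail s w M ++ [false] := by
  simp [fillStars, starTail]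

theorem prefixGe_starTail {s : Bool × Bool × Bool} {w M : List Bool} (hs : starWeight s = 2)
    (hw : IsDyck w) (hM : PrefixGe 0 M) : PrefixGe 0 (starTail s w M) := by
  obtain ⟨a, b, c⟩ := s
  have hw0 := hw.prefixGe
  cases a <;> cases b <;> cases c <;> simp [starWeight] at hs <;>
    simp [starTail, prefixGe_cons, prefixGe_append, hw.height_eq_zero] <;>
    exact ⟨hw0.mono (by norm_num), hM.mono (by norm_num)⟩

theorem fillStars_downJoin_upJoin_inj {us us' vs vs' : List (List Bool)}
    {w w' v0 v0' : List Bool} {s s' : Bool × Bool × Bool}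
    (hus : ∀ u ∈ us, IsDyck u) (hw : IsDyck w) (hvs : ∀ v ∈ vs, IsDyck v) (hv0 : IsDyck v0)
    (hus' : ∀ u ∈ us', IsDyck u) (hw' : IsDyck w') (hvs' : ∀ v ∈ vs', IsDyck v)
    (hv0' : IsDyck v0') (hs : starWeight s = 2) (hs' : starWeight s' = 2)
    (h : fillStars (downJoin us ++ [true]) w (upJoin vs v0 ++ [false]) s =
      fillStars (downJoin us' ++ [true]) w' (upJoin vs' v0' ++ [false]) s') :
    us = us' ∧ w = w' ∧ vs = vs' ∧ v0 = v0' := by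
  have hM := prefixGe_upJoin hvs hv0
  have hM' := prefixGe_upJoin hvs' hv0'
  rw [fillStars_eq_starTail, fillStars_eq_starTail, List.append_cancel_right_eq] at h
  obtain ⟨rfl, htail⟩ := downJoin_append_inj hus hus' (prefixGe_starTail hs hw hM)
    (prefixGe_starTail hs' hw' hM') h
  obtain ⟨a, b, c⟩ := s
  obtain ⟨a', b', c'⟩ := s'
  simp only [starTail, List.cons.injEq, true_and] at htail
  obtain ⟨rfl, rfl, htail⟩ := htail
  have hc : c = c' := by
    revert hs hs'; cases a <;> cases b <;> cases c <;> cases c' <;> decide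
  subst hc
  obtain ⟨rfl, hM⟩ : w = w' ∧ upJoin vs v0 = upJoin vs' v0' := by
    cases c
    · exact hw.append_false_inj hw' htail
    · exact append_true_inj_of_prefixGe hw.height_eq_zero hw'.height_eq_zero hM hM' htail
  obtain ⟨rfl, rfl⟩ := upJoin_inj hvs hv0 hvs' hv0' hM
  exact ⟨rfl, rfl, rfl, rfl⟩

theorem sixCycles_edge_disjoint_general (x y x' y' : List Bool)
    (E E' : Set (Sym2 (List Bool)))
    (h : FlipData x y E) (h' : FlipData x' y' E')
    (hne : (x, y) ≠ (x', y')) :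
    Disjoint E E' := by
  obtain ⟨us, vs, w, v0, -, hus, hvs, hw, hv0, rfl, rfl, rfl⟩ := h
  obtain ⟨us', vs', w', v0', -, hus', hvs', hw', hv0', rfl, rfl, rfl⟩ := h'
  refine Set.disjoint_left.mpr fun e he he' => hne ?_
  obtain ⟨s, s', hs, hs', heq⟩ := exists_starWeight_two_fillStars_eq he he'
  obtain ⟨rfl, rfl, rfl, rfl⟩ :=
    fillStars_downJoin_upJoin_inj hus hw hvs hv0 hus' hw' hvs' hv0' hs hs' heq
  rfl

/-- For any two distinct flippable pairs `(x,y)` and `(x',y')` of Dyck words in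
`D_n`, the corresponding 6-cycles `C_6(x,y)∘0` and `C_6(x',y')∘0` are
edge-disjoint. -/
theorem sixCycles_edge_disjoint (n : ℕ) (x y x' y' : List Bool)
    (E E' : Set (Sym2 (List Bool)))
    (hx : x ∈ DyckN n) (hy : y ∈ DyckN n) (hx' : x' ∈ DyckN n)
    (hy' : y' ∈ DyckN n)
    (h : FlipData x y E) (h' : FlipData x' y' E')
    (hne : (x, y) ≠ (x', y')) :
    Disjoint E E' :=
  sixCycles_edge_disjoint_general x y x' y' E E' h h' hne
end

section
/- Every rooted tree with n edges can be transformed into the star with n rays rooted at a leaf (corresponding to the Dyck word (1,1,0,1,0,…,1,0,0)) by a finite sequence of rotation and pull operations; consequently, the auxiliary graph H_n whose nodes are equivalence classes of rooted trees with n edges under rotation, with an edge for every flippable pair, is connected. -/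
/-- The rotation operation on Dyck words: the word with canonic decomposition
`(1,u,0,v)` is mapped to `(u,1,v,0)`. -/
def Rot (x y : List Bool) : Prop :=
  ∃ u v : List Bool, IsDyck u ∧ IsDyck v ∧
    x = true :: u ++ false :: v ∧ y = u ++ true :: v ++ [false]

/-- The star with `n` rays rooted at a leaf: the Dyck word
`(1,1,0,1,0,…,1,0,0)`. -/
def starWord (n : ℕ) : List Bool :=
  true :: (List.replicate (n - 1) [true, false]).flatten ++ [false]

open DyckStep Relation

def DyckStep.toBool : DyckStep → Bool
  | U => true
  | D => false

lemma DyckStep.toBool_injective : Function.Injective DyckStep.toBool := by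
  intro a b; cases a <;> cases b <;> simp [DyckStep.toBool]

lemma isDyck_iff_exists_dyckWord {x : List Bool} :
    IsDyck x ↔ ∃ p : DyckWord, p.toList.map DyckStep.toBool = x := by
  have hcount (l : List DyckStep) (s : DyckStep) :
      (l.map DyckStep.toBool).count s.toBool = l.count s :=
    List.count_map_of_injective _ _ DyckStep.toBool_injective s
  constructor
  · rintro ⟨hbal, hpre⟩
    have hl (y : List Bool) : (y.map fun b => if b then U else D).map DyckStep.toBool = y := by
      rw [List.map_map]; exact List.map_id'' (by decide) y
    refine ⟨⟨x.map fun b => if b then U else D, ?_, fun i => ?_⟩, hl x⟩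
    · rw [← hcount, ← hcount, hl]; exact hbal
    · rw [← hcount, ← hcount, List.map_take, hl]; exact hpre i
  · rintro ⟨p, rfl⟩
    refine ⟨?_, fun i => ?_⟩
    · exact (hcount _ U).trans (p.count_U_eq_count_D.trans (hcount _ D).symm)
    · rw [← List.map_take]
      exact (hcount _ D).trans_le ((p.count_D_le_count_U i).trans (hcount _ U).ge)

namespace IsDyck

variable {x u v : List Bool}

lemma nil : IsDyck [] := isDyck_iff_exists_dyckWord.2 ⟨0, rfl⟩

lemma append (hu : IsDyck u) (hv : IsDyck v) : IsDyck (u ++ v) := by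
  obtain ⟨p, rfl⟩ := isDyck_iff_exists_dyckWord.1 hu
  obtain ⟨q, rfl⟩ := isDyck_iff_exists_dyckWord.1 hv
  exact isDyck_iff_exists_dyckWord.2 ⟨p + q, List.map_append ..⟩

lemma nest (hu : IsDyck u) : IsDyck (true :: u ++ [false]) := by
  obtain ⟨p, rfl⟩ := isDyck_iff_exists_dyckWord.1 hu
  exact isDyck_iff_exists_dyckWord.2 ⟨p.nest, by simp [DyckWord.nest, DyckStep.toBool]⟩

lemma exists_eq_cons_append (hx : IsDyck x) (hne : x ≠ []) :
    ∃ u v, IsDyck u ∧ IsDyck v ∧ x = true :: u ++ false :: v := by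
  obtain ⟨p, rfl⟩ := isDyck_iff_exists_dyckWord.1 hx
  have hp : p ≠ 0 := by rintro rfl; exact hne rfl
  refine ⟨p.insidePart.toList.map DyckStep.toBool, p.outsidePart.toList.map DyckStep.toBool,
    isDyck_iff_exists_dyckWord.2 ⟨_, rfl⟩, isDyck_iff_exists_dyckWord.2 ⟨_, rfl⟩, ?_⟩
  conv_lhs => rw [← DyckWord.nest_insidePart_add_outsidePart hp]
  change ((U :: p.insidePart.toList ++ [D]) ++ p.outsidePart.toList).map _ = _
  simp [DyckStep.toBool]

lemma two_mul_count_true_s19 (hx : IsDyck x) : 2 * x.count true = x.length := by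
  rw [← List.count_true_add_count_false, ← hx.1]; ring

end IsDyck

lemma Flippable.append_right {x y c : List Bool} (h : Flippable x y) (hc : IsDyck c) :
    Flippable (x ++ c) (y ++ c) := by
  obtain ⟨us, vs, w, v0, hlen, hus, hvs, hw, hv0, rfl, rfl⟩ := h
  exact ⟨us, vs, w, v0 ++ c, hlen, hus, hvs, hw, hv0.append hc, by simp, by simp⟩

lemma Flippable.nest {x y a : List Bool} (h : Flippable x y) (ha : IsDyck a) :
    Flippable (true :: a ++ x ++ [false]) (true :: a ++ y ++ [false]) := by
  obtain ⟨us, vs, w, v0, hlen, hus, hvs, hw, hv0, rfl, rfl⟩ := h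
  refine ⟨a :: us, vs ++ [v0], w, [], by simp [hlen], ?_, ?_, hw, .nil, by simp, by simp⟩
  · simpa [ha] using hus
  · simpa [or_imp, forall_and, hv0] using hvs

def pendants (k : ℕ) : List Bool := (List.replicate k [true, false]).flatten

@[simp] lemma pendants_zero : pendants 0 = [] := rfl

lemma pendants_succ (k : ℕ) : pendants (k + 1) = true :: false :: pendants k := by
  simp [pendants, List.replicate_succ]

lemma pendants_succ' (k : ℕ) : pendants (k + 1) = pendants k ++ [true, false] := by
  simp [pendants, List.replicate_succ']

lemma isDyck_pendants (k : ℕ) : IsDyck (pendants k) := by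
  induction k with
  | zero => exact .nil
  | succ k ih => rw [pendants_succ]; exact IsDyck.nil.nest.append ih

lemma flippable_pendants (j k : ℕ) {b : List Bool} (hb : IsDyck b) :
    Flippable (true :: pendants j ++ true :: pendants (k + 1) ++ false :: b ++ [false])
      (true :: pendants (j + 1) ++ true :: pendants k ++ false :: b ++ [false]) :=
  ⟨[pendants j], [b], pendants k, [], rfl, by simp [isDyck_pendants], by simp [hb],
    isDyck_pendants k, .nil, by simp [pendants_succ], by simp [pendants_succ']⟩

lemma pull_pendants (j k : ℕ) {b : List Bool} (hb : IsDyck b) :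
    ReflTransGen Flippable (true :: pendants j ++ true :: pendants k ++ false :: b ++ [false])
      (true :: pendants (j + k + 1) ++ b ++ [false]) := by
  induction k generalizing j with
  | zero => simpa [pendants_succ'] using ReflTransGen.refl
  | succ k ih =>
    refine .head (flippable_pendants j k hb) ?_
    rw [show j + (k + 1) + 1 = j + 1 + k + 1 by ring]
    exact ih (j + 1)

lemma flatten_below_pendants (m : ℕ) {z : List Bool} (hz : IsDyck z) :
    ReflTransGen Flippable (true :: pendants m ++ z ++ [false])
      (true :: pendants (m + z.count true) ++ [false]) := by
  induction hlen : z.length using Nat.strong_induction_on generalizing m z with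
  | _ len ih =>
  subst hlen
  rcases eq_or_ne z [] with rfl | hne
  · simpa using ReflTransGen.refl
  obtain ⟨a, b, ha, hb, rfl⟩ := hz.exists_eq_cons_append hne
  have hflat_a : ReflTransGen Flippable (true :: a ++ [false])
      (true :: pendants (a.count true) ++ [false]) := by
    simpa using ih _ (by simp) 0 ha rfl
  have hflat_b := ih _ (by simp +arith) (m + a.count true + 1) hb rfl
  have hlift : ReflTransGen Flippable (true :: pendants m ++ (true :: a ++ false :: b) ++ [false])
      (true :: pendants m ++ true :: pendants (a.count true) ++ false :: b ++ [false]) := by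
    simpa [Function.onFun] using hflat_a.lift (fun t => true :: pendants m ++ (t ++ b) ++ [false])
      fun s t hst => (hst.append_right hb).nest (isDyck_pendants m)
  refine (hlift.trans (pull_pendants m _ hb)).trans ?_
  convert hflat_b using 4
  simp +arith

lemma exists_rot_to_nest {u v : List Bool} (hu : IsDyck u) (hv : IsDyck v) :
    ∃ z, IsDyck z ∧ z.count true = u.count true + v.count true ∧
      ReflTransGen Rot (true :: u ++ false :: v) (true :: z ++ [false]) := by
  induction hlen : u.length using Nat.strong_induction_on generalizing u v with
  | _ len ih =>
  subst hlen
  rcases eq_or_ne u [] with rfl | hne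
  · exact ⟨v, hv, by simp, .single ⟨[], v, .nil, hv, rfl, rfl⟩⟩
  obtain ⟨p, q, hp, hq, rfl⟩ := hu.exists_eq_cons_append hne
  have hrot : Rot (true :: (true :: p ++ false :: q) ++ false :: v)
      (true :: p ++ false :: (q ++ true :: v ++ [false])) :=
    ⟨_, v, hu, hv, rfl, by simp⟩
  have hv' : IsDyck (q ++ true :: v ++ [false]) := by simpa using hq.append hv.nest
  obtain ⟨z, hz, hcount, hz_rot⟩ := ih _ (by simp) hp hv' rfl
  exact ⟨z, hz, by simp +arith [hcount], .head hrot hz_rot⟩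

lemma reflTransGen_starWord {n : ℕ} (hn : 1 ≤ n) {x : List Bool} (hx : x ∈ DyckN n) :
    ReflTransGen (fun a b => Rot a b ∨ Flippable a b) x (starWord n) := by
  obtain ⟨hlen, hx⟩ := hx
  obtain ⟨u, v, hu, hv, rfl⟩ := hx.exists_eq_cons_append (List.ne_nil_of_length_pos (by omega))
  obtain ⟨z, hz, hcount, hrot⟩ := exists_rot_to_nest hu hv
  have hz_count : z.count true = n - 1 := by
    have := hx.two_mul_count_true_s19
    grind
  have hpull := flatten_below_pendants 0 hz
  rw [pendants_zero, zero_add, hz_count] at hpull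
  -- `starWord n` unfolds to `true :: pendants (n - 1) ++ [false]`
  exact (ReflTransGen.mono (fun _ _ => Or.inl) _ _ hrot).trans
    (ReflTransGen.mono (fun _ _ => Or.inr) _ _ hpull)

/-- Every rooted tree with `n` edges (encoded as a Dyck word in `D_n`) can be
transformed into the star with `n` rays rooted at a leaf by a finite sequence
of rotation and pull operations; consequently the auxiliary graph `H_n` is
connected: any two Dyck words in `D_n` are joined by a finite sequence of
rotations, pulls, and their inverses. -/
theorem trees_to_star_and_H_connected (n : ℕ) (hn : 1 ≤ n) :
    (∀ x ∈ DyckN n,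
      Relation.ReflTransGen (fun a b => Rot a b ∨ Flippable a b) x (starWord n)) ∧
    (∀ x ∈ DyckN n, ∀ y ∈ DyckN n,
      Relation.ReflTransGen
        (fun a b => Rot a b ∨ Rot b a ∨ Flippable a b ∨ Flippable b a) x y) := by
  refine ⟨fun x hx => reflTransGen_starWord hn hx, fun x hx y hy => ?_⟩
  have hy' := reflTransGen_swap.2 (reflTransGen_starWord hn hy)
  exact (ReflTransGen.mono (fun _ _ => by tauto) _ _ (reflTransGen_starWord hn hx)).trans
    (ReflTransGen.mono (fun _ _ => by tauto) _ _ hy')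
end
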